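/- arXiv:1405.7541 — 7 statements merged into one kernel-verified Lean document; each statement's English description precedes it below -/
import Mathlib

section
/- For every n ≥ 3, the alternating group A_n is generated by two elements. -/
open Equiv Equiv.Perm Subgroup

/-- If `G = ⟨s, t⟩` with `t` an involution not in `ker φ`, and `S` is a set of elements of
`ker φ` whose closure contains `s` or `s * t` and is invariant under conjugation by `t`,
then `S` generates `ker φ`. -/
lemma key_lemma {G M : Type*} [Group G] [Group M] (φ : G →* M) (s t : G)
    (htop : Subgroup.closure {s, t} = ⊤) (ht2 : t * t = 1) (htφ : φ t ≠ 1)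
    (S : Set G) (hS : Subgroup.closure S ≤ φ.ker)
    (hconj : ∀ x ∈ S, t * x * t ∈ Subgroup.closure S)
    (hs : s ∈ Subgroup.closure S ∨ s * t ∈ Subgroup.closure S) :
    Subgroup.closure S = φ.ker := by
  set C := Subgroup.closure S with hC
  have htinv : t⁻¹ = t := inv_eq_of_mul_eq_one_right ht2
  have hCconj : ∀ g ∈ C, t * g * t ∈ C := by
    intro g hg
    induction hg using Subgroup.closure_induction with
    | mem x hx => exact hconj x hx
    | one => rw [mul_one, ht2]; exact C.one_mem
    | mul x y hx hy ihx ihy =>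
        have : t * (x * y) * t = (t * x * t) * (t * y * t) := by
          rw [show (t * x * t) * (t * y * t) = t * x * (t * t) * y * t by group, ht2]; group
        rw [this]; exact C.mul_mem ihx ihy
    | inv x hx ih =>
        have : t * x⁻¹ * t = (t * x * t)⁻¹ := by rw [mul_inv_rev, mul_inv_rev, htinv]; group
        rw [this]; exact C.inv_mem ih
  have hP : ∀ g : G, g ∈ C ∨ g * t ∈ C := by
    intro g
    have hg : g ∈ Subgroup.closure ({s, t} : Set G) := htop ▸ Subgroup.mem_top g
    induction hg using Subgroup.closure_induction with
    | mem x hx =>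
        rcases hx with rfl | rfl
        · exact hs
        · right; rw [ht2]; exact C.one_mem
    | one => left; exact C.one_mem
    | mul x y hx hy ihx ihy =>
        rcases ihx with hx' | hx' <;> rcases ihy with hy' | hy'
        · left; exact C.mul_mem hx' hy'
        · right; rw [show x * y * t = x * (y * t) by group]; exact C.mul_mem hx' hy'
        · right
          have : x * y * t = (x * t) * (t * y * t) := by
            rw [show (x * t) * (t * y * t) = x * (t * t) * y * t by group, ht2]; group
          rw [this]; exact C.mul_mem hx' (hCconj y hy')
        · left
          have hyt : t * (y * t) * t ∈ C := hCconj _ hy'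
          have : x * y = (x * t) * (t * (y * t) * t) := by
            rw [show (x * t) * (t * (y * t) * t) = x * (t * t) * y * (t * t) by group, ht2]
            group
          rw [this]; exact C.mul_mem hx' hyt
    | inv x hx ih =>
        rcases ih with h | h
        · left; exact C.inv_mem h
        · right
          have : x⁻¹ * t = t * (x * t)⁻¹ * t := by
            rw [mul_inv_rev]; group
          rw [this]; exact hCconj _ (C.inv_mem h)
  apply le_antisymm hS
  intro g hg
  rcases hP g with h | h
  · exact h
  · exfalso
    have h1 : φ (g * t) = 1 := hS h
    have h2 : φ g = 1 := hg
    rw [map_mul, h2, one_mul] at h1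
    exact htφ h1

/-- If two elements of a subgroup generate it as a subgroup of the ambient group,
they generate it as a group. -/
lemma bridge {G : Type*} [Group G] (K : Subgroup G) (a b : K)
    (h : Subgroup.closure {(a : G), (b : G)} = K) :
    Subgroup.closure ({a, b} : Set K) = ⊤ := by
  apply Subgroup.map_injective (K.subtype_injective)
  rw [MonoidHom.map_closure, Set.image_insert_eq, Set.image_singleton,
    ← MonoidHom.range_eq_map, Subgroup.range_subtype]
  exact h

/-- For every n ≥ 3 the alternating group A_n is 2-generated. -/
theorem alternating_two_generated (n : ℕ) (hn : 3 ≤ n) :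
    ∃ x y : alternatingGroup (Fin n), Subgroup.closure {x, y} = ⊤ := by
  have hinst : NeZero n := ⟨by omega⟩
  set σ : Perm (Fin n) := finRotate n with hσ
  have hcyc : σ.IsCycle := isCycle_finRotate_of_le (by omega)
  have hsupp : σ.support = Finset.univ := support_finRotate_of_le (by omega)
  set τ : Perm (Fin n) := Equiv.swap 0 (σ 0) with hτ
  have hne : (0 : Fin n) ≠ σ 0 := by
    have : (0 : Fin n) ∈ σ.support := hsupp ▸ Finset.mem_univ _
    exact (Perm.mem_support.mp this).symm
  have htop : Subgroup.closure ({σ, τ} : Set (Perm (Fin n))) = ⊤ :=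
    closure_cycle_adjacent_swap hcyc hsupp 0
  have ht2 : τ * τ = 1 := Equiv.swap_mul_self _ _
  have hsτ : Perm.sign τ = -1 := Perm.sign_swap hne
  have htφ : Perm.sign τ ≠ 1 := by rw [hsτ]; decide
  have hker : (Perm.sign : Perm (Fin n) →* ℤˣ).ker = alternatingGroup (Fin n) := rfl
  rcases Int.units_eq_one_or (Perm.sign σ) with hsσ | hsσ
  · -- σ even: generators σ and τ * σ * τ
    have hkey : Subgroup.closure ({σ, τ * σ * τ} : Set (Perm (Fin n)))
        = (Perm.sign : Perm (Fin n) →* ℤˣ).ker := by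
      apply key_lemma _ σ τ htop ht2 htφ
      · rw [Subgroup.closure_le]
        rintro x (rfl | rfl) <;> rw [SetLike.mem_coe, MonoidHom.mem_ker] <;>
          simp [map_mul, hsσ, hsτ]
      · rintro x (rfl | rfl)
        · exact subset_closure (Set.mem_insert_of_mem _ rfl)
        · have heq : τ * (τ * σ * τ) * τ = (τ * τ) * σ * (τ * τ) := by group
          rw [heq, ht2, one_mul, mul_one]
          exact subset_closure (Set.mem_insert _ _)
      · exact Or.inl (subset_closure (Set.mem_insert _ _))
    refine ⟨⟨σ, ?_⟩, ⟨τ * σ * τ, ?_⟩, ?_⟩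
    · exact hker ▸ hkey ▸ subset_closure (Set.mem_insert _ _)
    · exact hker ▸ hkey ▸ subset_closure (Set.mem_insert_of_mem _ rfl)
    · exact bridge _ _ _ (hkey.trans hker)
  · -- σ odd: generators σ * σ and τ * σ
    have htinv : τ⁻¹ = τ := inv_eq_of_mul_eq_one_right ht2
    have hστ : σ * τ ∈ Subgroup.closure ({σ * σ, τ * σ} : Set (Perm (Fin n))) := by
      have heq : σ * τ = (σ * σ) * (τ * σ)⁻¹ := by rw [mul_inv_rev, htinv]; group
      rw [heq]
      exact Subgroup.mul_mem _ (subset_closure (Set.mem_insert _ _))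
        (Subgroup.inv_mem _ (subset_closure (Set.mem_insert_of_mem _ rfl)))
    have hkey : Subgroup.closure ({σ * σ, τ * σ} : Set (Perm (Fin n)))
        = (Perm.sign : Perm (Fin n) →* ℤˣ).ker := by
      apply key_lemma _ σ τ htop ht2 htφ
      · rw [Subgroup.closure_le]
        rintro x (rfl | rfl) <;> rw [SetLike.mem_coe, MonoidHom.mem_ker] <;>
          simp [map_mul, hsσ, hsτ]
      · rintro x (rfl | rfl)
        · have heq : τ * (σ * σ) * τ = (τ * σ) * (σ * σ) * (τ * σ)⁻¹ * (τ * τ) := by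
            group
          rw [heq, ht2, mul_one]
          exact Subgroup.mul_mem _
            (Subgroup.mul_mem _ (subset_closure (Set.mem_insert_of_mem _ rfl))
              (subset_closure (Set.mem_insert _ _)))
            (Subgroup.inv_mem _ (subset_closure (Set.mem_insert_of_mem _ rfl)))
        · have heq : τ * (τ * σ) * τ = (τ * τ) * (σ * τ) := by group
          rw [heq, ht2, one_mul]
          exact hστ
      · exact Or.inr hστ
    refine ⟨⟨σ * σ, ?_⟩, ⟨τ * σ, ?_⟩, ?_⟩
    · exact hker ▸ hkey ▸ subset_closure (Set.mem_insert _ _)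
    · exact hker ▸ hkey ▸ subset_closure (Set.mem_insert_of_mem _ rfl)
    · exact bridge _ _ _ (hkey.trans hker)
end

section
/- If two finite groups G and H have coprime orders and each is a Beauville group, then G × H is a Beauville group. -/
/-- The set Σ(x,y): all conjugates of powers (1 ≤ i ≤ |G|) of x, y and xy. -/
def BSigma {G : Type*} [Group G] (x y : G) : Set G :=
  ⋃ i ∈ Finset.Icc 1 (Nat.card G), ⋃ g : G,
    ({g * x ^ i * g⁻¹, g * y ^ i * g⁻¹, g * (x * y) ^ i * g⁻¹} : Set G)

/-- A finite group is a Beauville group if it admits an unmixed Beauville structure. -/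
def IsBeauville (G : Type*) [Group G] : Prop :=
  ∃ x₁ y₁ x₂ y₂ : G,
    Subgroup.closure {x₁, y₁} = ⊤ ∧ Subgroup.closure {x₂, y₂} = ⊤ ∧
    BSigma x₁ y₁ ∩ BSigma x₂ y₂ = {1}

/-- A strongly real Beauville group: a Beauville structure together with an automorphism
φ and elements g₁, g₂ inverting the generators. -/
def IsStronglyRealBeauville (G : Type*) [Group G] : Prop :=
  ∃ x₁ y₁ x₂ y₂ : G,
    Subgroup.closure {x₁, y₁} = ⊤ ∧ Subgroup.closure {x₂, y₂} = ⊤ ∧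
    BSigma x₁ y₁ ∩ BSigma x₂ y₂ = {1} ∧
    ∃ (φ : G ≃* G) (g₁ g₂ : G),
      g₁ * φ x₁ * g₁⁻¹ = x₁⁻¹ ∧ g₁ * φ y₁ * g₁⁻¹ = y₁⁻¹ ∧
      g₂ * φ x₂ * g₂⁻¹ = x₂⁻¹ ∧ g₂ * φ y₂ * g₂⁻¹ = y₂⁻¹

lemma mem_BSigma_iff {G : Type*} [Group G] {x y z : G} :
    z ∈ BSigma x y ↔ ∃ i ∈ Finset.Icc 1 (Nat.card G), ∃ g : G,
      z = g * x ^ i * g⁻¹ ∨ z = g * y ^ i * g⁻¹ ∨ z = g * (x * y) ^ i * g⁻¹ := by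
  simp [BSigma, Set.mem_iUnion, Set.mem_insert_iff]

/-- A uniform exponent reduction: any power with exponent `i ≥ 1` equals a power with
exponent in `[1, |G|]`, with the same reduced exponent working for all elements. -/
lemma exists_pow_eq_pow_Icc (G : Type*) [Group G] [Finite G] {i : ℕ} (hi : 1 ≤ i) :
    ∃ j ∈ Finset.Icc 1 (Nat.card G), ∀ x : G, x ^ i = x ^ j := by
  have hn : 0 < Nat.card G := Nat.card_pos
  by_cases h : i % Nat.card G = 0
  · refine ⟨Nat.card G, Finset.mem_Icc.mpr ⟨hn, le_rfl⟩, fun x => ?_⟩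
    obtain ⟨c, rfl⟩ := Nat.dvd_of_mod_eq_zero h
    rw [pow_mul, pow_card_eq_one', one_pow]
  · refine ⟨i % Nat.card G, ?_, fun x => ?_⟩
    · simp only [Finset.mem_Icc]
      exact ⟨Nat.one_le_iff_ne_zero.mpr h, (Nat.mod_lt i hn).le⟩
    · conv_lhs => rw [← Nat.mod_add_div i (Nat.card G)]
      rw [pow_add, pow_mul, pow_card_eq_one', one_pow, mul_one]

lemma one_mem_BSigma {G : Type*} [Group G] [Finite G] (x y : G) : (1 : G) ∈ BSigma x y := by
  rw [mem_BSigma_iff]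
  exact ⟨Nat.card G, Finset.mem_Icc.mpr ⟨Nat.card_pos, le_rfl⟩, 1,
    Or.inl (by rw [pow_card_eq_one']; group)⟩

lemma fst_mem_BSigma {G H : Type*} [Group G] [Group H] [Finite G] [Finite H]
    {x y : G} {a b : H} {p : G × H} (hp : p ∈ BSigma (x, a) (y, b)) :
    p.1 ∈ BSigma x y := by
  rw [mem_BSigma_iff] at hp
  obtain ⟨i, hi, g, hg⟩ := hp
  obtain ⟨j, hj, hpow⟩ := exists_pow_eq_pow_Icc G (Finset.mem_Icc.mp hi).1
  rw [mem_BSigma_iff]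
  refine ⟨j, hj, g.1, ?_⟩
  rcases hg with h | h | h
  · exact Or.inl (by rw [← hpow]; exact congrArg Prod.fst h)
  · exact Or.inr (Or.inl (by rw [← hpow]; exact congrArg Prod.fst h))
  · refine Or.inr (Or.inr ?_)
    have := congrArg Prod.fst h
    simpa [← hpow] using this

lemma snd_mem_BSigma {G H : Type*} [Group G] [Group H] [Finite G] [Finite H]
    {x y : G} {a b : H} {p : G × H} (hp : p ∈ BSigma (x, a) (y, b)) :
    p.2 ∈ BSigma a b := by
  rw [mem_BSigma_iff] at hp
  obtain ⟨i, hi, g, hg⟩ := hp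
  obtain ⟨j, hj, hpow⟩ := exists_pow_eq_pow_Icc H (Finset.mem_Icc.mp hi).1
  rw [mem_BSigma_iff]
  refine ⟨j, hj, g.2, ?_⟩
  rcases hg with h | h | h
  · exact Or.inl (by rw [← hpow]; exact congrArg Prod.snd h)
  · exact Or.inr (Or.inl (by rw [← hpow]; exact congrArg Prod.snd h))
  · refine Or.inr (Or.inr ?_)
    have := congrArg Prod.snd h
    simpa [← hpow] using this

lemma closure_pair_prod {G H : Type*} [Group G] [Group H] [Finite G] [Finite H]
    (hco : Nat.Coprime (Nat.card G) (Nat.card H))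
    {x y : G} {a b : H} (hG : Subgroup.closure {x, y} = ⊤)
    (hH : Subgroup.closure {a, b} = ⊤) :
    Subgroup.closure {((x, a) : G × H), (y, b)} = ⊤ := by
  set n := Nat.card G
  set m := Nat.card H
  set K := Subgroup.closure ({(x, a), (y, b)} : Set (G × H)) with hK
  have bezout : (1 : ℤ) = n * Nat.gcdA n m + m * Nat.gcdB n m := by
    have := Nat.gcd_eq_gcd_ab n m
    rwa [hco, Nat.cast_one] at this
  have hxpow : ∀ u : G, u ^ ((m : ℤ) * Nat.gcdB n m) = u := by
    intro u
    have : ((m : ℤ) * Nat.gcdB n m) = 1 - n * Nat.gcdA n m := by linarith [bezout]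
    rw [this, zpow_sub, zpow_one, zpow_mul, zpow_natCast, pow_card_eq_one', one_zpow, inv_one,
      mul_one]
  have hapow : ∀ u : H, u ^ ((m : ℤ) * Nat.gcdB n m) = 1 := by
    intro u
    rw [zpow_mul, zpow_natCast, pow_card_eq_one', one_zpow]
  have hxpow' : ∀ u : H, u ^ ((n : ℤ) * Nat.gcdA n m) = u := by
    intro u
    have : ((n : ℤ) * Nat.gcdA n m) = 1 - m * Nat.gcdB n m := by linarith [bezout]
    rw [this, zpow_sub, zpow_one, zpow_mul, zpow_natCast, pow_card_eq_one', one_zpow, inv_one,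
      mul_one]
  have hapow' : ∀ u : G, u ^ ((n : ℤ) * Nat.gcdA n m) = 1 := by
    intro u
    rw [zpow_mul, zpow_natCast, pow_card_eq_one', one_zpow]
  have key1 : ∀ p : G × H, p ∈ K → ((p.1, 1) : G × H) ∈ K := by
    intro p hp
    have := K.zpow_mem hp ((m : ℤ) * Nat.gcdB n m)
    have heq : p ^ ((m : ℤ) * Nat.gcdB n m) = (p.1, 1) := by
      ext
      · exact hxpow p.1
      · exact hapow p.2
    rwa [heq] at this
  have key2 : ∀ p : G × H, p ∈ K → ((1, p.2) : G × H) ∈ K := by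
    intro p hp
    have := K.zpow_mem hp ((n : ℤ) * Nat.gcdA n m)
    have heq : p ^ ((n : ℤ) * Nat.gcdA n m) = (1, p.2) := by
      ext
      · exact hapow' p.1
      · exact hxpow' p.2
    rwa [heq] at this
  have hxK : ((x, a) : G × H) ∈ K := Subgroup.subset_closure (by simp)
  have hyK : ((y, b) : G × H) ∈ K := Subgroup.subset_closure (by simp)
  have hleft : ∀ g : G, ((g, 1) : G × H) ∈ K := by
    intro g
    have hg : g ∈ Subgroup.closure ({x, y} : Set G) := by rw [hG]; trivial
    refine Subgroup.closure_induction (p := fun g _ => ((g, 1) : G × H) ∈ K) ?_ ?_ ?_ ?_ hg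
    · rintro z hz
      rcases hz with rfl | rfl
      · exact key1 _ hxK
      · exact key1 _ hyK
    · exact K.one_mem
    · intro u v _ _ hu hv
      have := K.mul_mem hu hv
      simpa using this
    · intro u _ hu
      have := K.inv_mem hu
      simpa using this
  have hright : ∀ h : H, ((1, h) : G × H) ∈ K := by
    intro h
    have hg : h ∈ Subgroup.closure ({a, b} : Set H) := by rw [hH]; trivial
    refine Subgroup.closure_induction (p := fun h _ => ((1, h) : G × H) ∈ K) ?_ ?_ ?_ ?_ hg
    · rintro z hz
      rcases hz with rfl | rfl
      · exact key2 _ hxK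
      · exact key2 _ hyK
    · exact K.one_mem
    · intro u v _ _ hu hv
      have := K.mul_mem hu hv
      simpa using this
    · intro u _ hu
      have := K.inv_mem hu
      simpa using this
  rw [eq_top_iff]
  rintro ⟨g, h⟩ -
  have : ((g, h) : G × H) = (g, 1) * (1, h) := by simp
  rw [this]
  exact K.mul_mem (hleft g) (hright h)

/-- The direct product of two Beauville groups of coprime orders is a Beauville group. -/
theorem beauville_product_of_coprime (G H : Type*) [Group G] [Group H] [Finite G] [Finite H]
    (hco : Nat.Coprime (Nat.card G) (Nat.card H))
    (hG : IsBeauville G) (hH : IsBeauville H) :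
    IsBeauville (G × H) := by
  obtain ⟨x₁, y₁, x₂, y₂, hGc1, hGc2, hGs⟩ := hG
  obtain ⟨a₁, b₁, a₂, b₂, hHc1, hHc2, hHs⟩ := hH
  refine ⟨(x₁, a₁), (y₁, b₁), (x₂, a₂), (y₂, b₂),
    closure_pair_prod hco hGc1 hHc1, closure_pair_prod hco hGc2 hHc2, ?_⟩
  apply Set.eq_singleton_iff_unique_mem.mpr
  constructor
  · exact ⟨one_mem_BSigma _ _, one_mem_BSigma _ _⟩
  · rintro ⟨u, v⟩ ⟨h1, h2⟩
    have hu : u ∈ BSigma x₁ y₁ ∩ BSigma x₂ y₂ := ⟨fst_mem_BSigma h1, fst_mem_BSigma h2⟩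
    have hv : v ∈ BSigma a₁ b₁ ∩ BSigma a₂ b₂ := ⟨snd_mem_BSigma h1, snd_mem_BSigma h2⟩
    rw [hGs] at hu
    rw [hHs] at hv
    simp only [Set.mem_singleton_iff] at hu hv
    exact Prod.ext hu hv
end

section
/- Let G be a finite group, let {x1,y1} and {x2,y2} each generate G, and suppose o(x1)·o(y1)·o(x1y1) is coprime to o(x2)·o(y2)·o(x2y2). Then in G × G the pair ((x1,x2),(y1,y2)) generates G × G. -/
private lemma mem_of_pow_mem' {G : Type*} [Group G] {H : Subgroup G} {g : G} {n : ℕ}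
    (hco : Nat.Coprime n (orderOf g)) (h : g ^ n ∈ H) : g ∈ H := by
  rcases Nat.eq_zero_or_pos (orderOf g) with h0 | h0
  · rw [h0, Nat.coprime_zero_right] at hco
    simpa [hco] using h
  rcases Nat.eq_or_lt_of_le h0 with h1 | h1
  · have : g = 1 := orderOf_eq_one_iff.mp h1.symm
    rw [this]; exact one_mem H
  obtain ⟨k, -, hk⟩ := Nat.exists_mul_mod_eq_one_of_coprime hco h1
  have : g ^ (n * k) = g := by
    rw [← pow_mod_orderOf, hk, pow_one]
  rw [← this, pow_mul]
  exact pow_mem h k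

/-- If {x₁,y₁} and {x₂,y₂} generate G and the products of the orders of the two triples are
coprime, then ((x₁,x₂),(y₁,y₂)) generates G × G. -/
theorem diagonal_pair_generates (G : Type*) [Group G] [Finite G] (x₁ y₁ x₂ y₂ : G)
    (h₁ : Subgroup.closure {x₁, y₁} = ⊤) (h₂ : Subgroup.closure {x₂, y₂} = ⊤)
    (hco : Nat.Coprime (orderOf x₁ * orderOf y₁ * orderOf (x₁ * y₁))
                       (orderOf x₂ * orderOf y₂ * orderOf (x₂ * y₂))) :
    Subgroup.closure {((x₁, x₂) : G × G), ((y₁, y₂) : G × G)} = ⊤ := by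
  set n₁ := orderOf x₁ * orderOf y₁ * orderOf (x₁ * y₁) with hn₁
  set n₂ := orderOf x₂ * orderOf y₂ * orderOf (x₂ * y₂) with hn₂
  set H := Subgroup.closure {((x₁, x₂) : G × G), ((y₁, y₂) : G × G)} with hH
  have hmemx : ((x₁, x₂) : G × G) ∈ H := Subgroup.subset_closure (by simp)
  have hmemy : ((y₁, y₂) : G × G) ∈ H := Subgroup.subset_closure (by simp)
  -- left coordinates
  have left : ∀ (a : G) (b : G), orderOf a ∣ n₁ → ((a, b) : G × G) ∈ H →
      orderOf b ∣ n₂ → ((a, 1) : G × G) ∈ H := by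
    intro a b ha hab hb
    have hco' : Nat.Coprime n₂ (orderOf ((a, 1) : G × G)) := by
      have : orderOf ((a, 1) : G × G) = orderOf a := by
        rw [Prod.orderOf]; simp
      rw [this]
      exact (hco.symm.coprime_dvd_right ha)
    apply mem_of_pow_mem' hco'
    have : ((a, 1) : G × G) ^ n₂ = (a, b) ^ n₂ := by
      ext
      · simp
      · simp [orderOf_dvd_iff_pow_eq_one.mp hb]
    rw [this]
    exact pow_mem hab n₂
  have right : ∀ (a : G) (b : G), orderOf a ∣ n₁ → ((a, b) : G × G) ∈ H →
      orderOf b ∣ n₂ → ((1, b) : G × G) ∈ H := by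
    intro a b ha hab hb
    have hco' : Nat.Coprime n₁ (orderOf ((1, b) : G × G)) := by
      have : orderOf ((1, b) : G × G) = orderOf b := by
        rw [Prod.orderOf]; simp
      rw [this]
      exact (hco.coprime_dvd_right hb)
    apply mem_of_pow_mem' hco'
    have : ((1, b) : G × G) ^ n₁ = (a, b) ^ n₁ := by
      ext
      · simp [orderOf_dvd_iff_pow_eq_one.mp ha]
      · simp
    rw [this]
    exact pow_mem hab n₁
  have dx1 : orderOf x₁ ∣ n₁ := (dvd_mul_right _ _).trans (dvd_mul_right _ _)
  have dy1 : orderOf y₁ ∣ n₁ := (dvd_mul_left _ _).trans (dvd_mul_right _ _)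
  have dx2 : orderOf x₂ ∣ n₂ := (dvd_mul_right _ _).trans (dvd_mul_right _ _)
  have dy2 : orderOf y₂ ∣ n₂ := (dvd_mul_left _ _).trans (dvd_mul_right _ _)
  have hx1 : ((x₁, 1) : G × G) ∈ H := left x₁ x₂ dx1 hmemx dx2
  have hy1 : ((y₁, 1) : G × G) ∈ H := left y₁ y₂ dy1 hmemy dy2
  have hx2 : ((1, x₂) : G × G) ∈ H := right x₁ x₂ dx1 hmemx dx2
  have hy2 : ((1, y₂) : G × G) ∈ H := right y₁ y₂ dy1 hmemy dy2
  rw [eq_top_iff]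
  rintro ⟨a, b⟩ -
  have hL : (Subgroup.closure {x₁, y₁}).map (MonoidHom.inl G G) ≤ H := by
    rw [MonoidHom.map_closure]
    apply (Subgroup.closure_le _).mpr
    rintro z ⟨w, hw, rfl⟩
    rcases hw with rfl | rfl
    · exact hx1
    · exact hy1
  have hR : (Subgroup.closure {x₂, y₂}).map (MonoidHom.inr G G) ≤ H := by
    rw [MonoidHom.map_closure]
    apply (Subgroup.closure_le _).mpr
    rintro z ⟨w, hw, rfl⟩
    rcases hw with rfl | rfl
    · exact hx2
    · exact hy2
  have ha : ((a, 1) : G × G) ∈ H := hL ⟨a, by simp [h₁], rfl⟩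
  have hb : ((1, b) : G × G) ∈ H := hR ⟨b, by simp [h₂], rfl⟩
  have : ((a, b) : G × G) = (a, 1) * (1, b) := by simp
  rw [this]
  exact mul_mem ha hb
end

section
/- Let H ≤ S_n be a transitive permutation group of degree n containing a permutation whose cycle structure consists of exactly two cycles of coprime lengths c, d > 1 with c + d = n. Then H contains A_n. -/
open Equiv Equiv.Perm Finset

variable {n : ℕ}

def t3 (a b c : Fin n) : Equiv.Perm (Fin n) := Equiv.swap a c * Equiv.swap a b

lemma t3_apply {a b c : Fin n} (hab : a ≠ b) (hac : a ≠ c) (hbc : b ≠ c) (z : Fin n) :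
    t3 a b c z = if z = a then b else if z = b then c else if z = c then a else z := by
  split_ifs with h1 h2 h3 <;>
    simp_all [t3, Equiv.swap_apply_def] <;> tauto

theorem Equiv.Perm.apply_inv_self (f : Equiv.Perm (Fin n)) (x : Fin n) : f (f⁻¹ x) = x :=
  Equiv.apply_symm_apply f x

theorem Equiv.Perm.inv_apply_self (f : Equiv.Perm (Fin n)) (x : Fin n) : f⁻¹ (f x) = x :=
  Equiv.symm_apply_apply f x

lemma commutator_eq_t3 {x y : Equiv.Perm (Fin n)} {a : Fin n}
    (h : x.support ∩ y.support = {a}) :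
    x * y * x⁻¹ * y⁻¹ = t3 a (x a) (y a) := by
  have key : ∀ p, p ∈ x.support → p ∈ y.support → p = a := by
    intro p h1 h2
    have : p ∈ x.support ∩ y.support := Finset.mem_inter.mpr ⟨h1, h2⟩
    rwa [h, Finset.mem_singleton] at this
  have hax : a ∈ x.support := by
    have : a ∈ x.support ∩ y.support := by rw [h]; exact Finset.mem_singleton_self a
    exact (Finset.mem_inter.mp this).1
  have hay : a ∈ y.support := by
    have : a ∈ x.support ∩ y.support := by rw [h]; exact Finset.mem_singleton_self a
    exact (Finset.mem_inter.mp this).2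
  have hxa : x a ≠ a := mem_support.mp hax
  have hya : y a ≠ a := mem_support.mp hay
  have hxs : x a ∈ x.support := apply_mem_support.mpr hax
  have hys : y a ∈ y.support := apply_mem_support.mpr hay
  have hxay : x a ∉ y.support := fun hc => hxa (key _ hxs hc)
  have hyax : y a ∉ x.support := fun hc => hya (key _ hc hys)
  have hxya : x a ≠ y a := fun hc => hxay (hc ▸ hys)
  have fx : ∀ {p}, p ∉ x.support → x p = p := fun hp => notMem_support.mp hp
  have fy : ∀ {p}, p ∉ y.support → y p = p := fun hp => notMem_support.mp hp
  have fxi : ∀ {p}, p ∉ x.support → x⁻¹ p = p := by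
    intro p hp; rw [← support_inv] at hp; exact notMem_support.mp hp
  have fyi : ∀ {p}, p ∉ y.support → y⁻¹ p = p := by
    intro p hp; rw [← support_inv] at hp; exact notMem_support.mp hp
  ext p
  simp only [Equiv.Perm.mul_apply, t3_apply (Ne.symm hxa) (Ne.symm hya) hxya]
  by_cases hpa : p = a
  · subst hpa
    have h1 : y⁻¹ p ∈ y.support := by rw [← support_inv] at hay ⊢; exact apply_mem_support.mpr hay
    have h1' : y⁻¹ p ≠ p := by
      intro hc; exact hya (by conv_lhs => rw [← hc, apply_inv_self])
    have h2 : y⁻¹ p ∉ x.support := fun hc => h1' (key _ hc h1)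
    rw [fxi h2, apply_inv_self, if_pos rfl]
  by_cases hpxa : p = x a
  · subst hpxa
    rw [fyi hxay, inv_apply_self, fx hyax, if_neg hxa, if_pos rfl]
  by_cases hpya : p = y a
  · subst hpya
    have h1 : x⁻¹ a ∈ x.support := by rw [← support_inv] at hax ⊢; exact apply_mem_support.mpr hax
    have h1' : x⁻¹ a ≠ a := by
      intro hc; exact hxa (by conv_lhs => rw [← hc, apply_inv_self])
    have h2 : x⁻¹ a ∉ y.support := fun hc => h1' (key _ h1 hc)
    rw [inv_apply_self, fy h2, apply_inv_self, if_neg hya, if_neg (Ne.symm hxya), if_pos rfl]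
  · rw [if_neg hpa, if_neg hpxa, if_neg hpya]
    by_cases hpy : p ∈ y.support
    · have h1 : y⁻¹ p ∈ y.support := by
        rw [← support_inv] at hpy ⊢; exact apply_mem_support.mpr hpy
      have h1' : y⁻¹ p ≠ a := by
        intro hc
        exact hpya (by conv_lhs => rw [← apply_inv_self y p, hc])
      have h2 : y⁻¹ p ∉ x.support := fun hc => h1' (key _ hc h1)
      have h3 : p ∉ x.support := fun hc => hpa (key _ hc hpy)
      rw [fxi h2, apply_inv_self, fx h3]
    · rw [fyi hpy]
      by_cases hpx : p ∈ x.support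
      · have h1 : x⁻¹ p ∈ x.support := by
          rw [← support_inv] at hpx ⊢; exact apply_mem_support.mpr hpx
        have h1' : x⁻¹ p ≠ a := by
          intro hc
          exact hpxa (by conv_lhs => rw [← apply_inv_self x p, hc])
        have h2 : x⁻¹ p ∉ y.support := fun hc => h1' (key _ h1 hc)
        rw [fy h2, apply_inv_self]
      · rw [fxi hpx, fy hpy, fx hpx]


lemma t3_fst {a b c : Fin n} (hab : a ≠ b) (hac : a ≠ c) (hbc : b ≠ c) :
    t3 a b c a = b := by
  rw [t3_apply hab hac hbc]; simp

lemma t3_snd {a b c : Fin n} (hab : a ≠ b) (hac : a ≠ c) (hbc : b ≠ c) :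
    t3 a b c b = c := by
  rw [t3_apply hab hac hbc]; simp [Ne.symm hab]

lemma t3_thd {a b c : Fin n} (hab : a ≠ b) (hac : a ≠ c) (hbc : b ≠ c) :
    t3 a b c c = a := by
  rw [t3_apply hab hac hbc]; simp [Ne.symm hac, Ne.symm hbc]

lemma t3_oth {a b c z : Fin n} (hab : a ≠ b) (hac : a ≠ c) (hbc : b ≠ c)
    (hza : z ≠ a) (hzb : z ≠ b) (hzc : z ≠ c) : t3 a b c z = z := by
  rw [t3_apply hab hac hbc]; simp [hza, hzb, hzc]

lemma t3_conj (k : Equiv.Perm (Fin n)) (a b c : Fin n) :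
    k * t3 a b c * k⁻¹ = t3 (k a) (k b) (k c) := by
  simp only [t3]
  rw [show k * (Equiv.swap a c * Equiv.swap a b) * k⁻¹
      = (k * Equiv.swap a c * k⁻¹) * (k * Equiv.swap a b * k⁻¹) by group]
  rw [Equiv.swap_apply_apply, Equiv.swap_apply_apply]

lemma t3_mul_1 {u v w x : Fin n} (huv : u ≠ v) (huw : u ≠ w) (hux : u ≠ x)
    (hvw : v ≠ w) (hvx : v ≠ x) (hwx : w ≠ x) :
    t3 u v x * t3 x v w = t3 u v w := by
  ext z
  simp only [Equiv.Perm.mul_apply, t3_apply huv hux hvx,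
    t3_apply (Ne.symm hvx) (Ne.symm hwx) hvw, t3_apply huv huw hvw]
  split_ifs <;> simp_all

lemma t3_mul_2 {u v w x : Fin n} (huv : u ≠ v) (huw : u ≠ w) (hux : u ≠ x)
    (hvw : v ≠ w) (hvx : v ≠ x) (hwx : w ≠ x) :
    t3 u x w * t3 u v x = t3 u v w := by
  ext z
  simp only [Equiv.Perm.mul_apply, t3_apply hux huw (Ne.symm hwx),
    t3_apply huv hux hvx, t3_apply huv huw hvw]
  split_ifs <;> simp_all


lemma card_dvd_of_block {γ : Equiv.Perm (Fin n)} (hγ : γ.IsCycle) {X : Finset (Fin n)}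
    (hX : X.Nonempty) (hXs : X ⊆ γ.support)
    (hb : ∀ k : ℕ, X.image ⇑(γ^k) = X ∨ Disjoint (X.image ⇑(γ^k)) X) :
    X.card ∣ γ.support.card := by
  classical
  set T : Finset (Finset (Fin n)) :=
    (Finset.range (orderOf γ)).image (fun k => X.image ⇑(γ^k)) with hT
  have himg : ∀ j k : ℕ, X.image ⇑(γ^j) = X.image ⇑(γ^k)
      ∨ Disjoint (X.image ⇑(γ^j)) (X.image ⇑(γ^k)) := by
    have main : ∀ j k : ℕ, j ≤ k → X.image ⇑(γ^j) = X.image ⇑(γ^k)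
        ∨ Disjoint (X.image ⇑(γ^j)) (X.image ⇑(γ^k)) := by
      intro j k hjk
      have hcomp : X.image ⇑(γ^k) = (X.image ⇑(γ^(k-j))).image ⇑(γ^j) := by
        rw [Finset.image_image, ← Equiv.Perm.coe_mul, ← pow_add, Nat.add_sub_cancel' hjk]
      rcases hb (k - j) with h1 | h1
      · left; rw [hcomp, h1]
      · right
        rw [hcomp]
        rw [Finset.disjoint_image (Equiv.injective _)]
        exact h1.symm
      -- note orientation
    intro j k
    rcases le_total j k with h | h
    · exact main j k h
    · rcases main k j h with h1 | h1
      · exact Or.inl h1.symm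
      · exact Or.inr h1.symm
  have hdisj : ∀ t1 ∈ T, ∀ t2 ∈ T, t1 ≠ t2 → Disjoint t1 t2 := by
    intro t1 ht1 t2 ht2 hne
    obtain ⟨j, -, rfl⟩ := Finset.mem_image.mp ht1
    obtain ⟨k, -, rfl⟩ := Finset.mem_image.mp ht2
    rcases himg j k with h1 | h1
    · exact absurd h1 hne
    · exact h1
  have hcover : γ.support = T.biUnion (fun t => t) := by
    apply Finset.Subset.antisymm
    · intro w hw
      obtain ⟨x₀, hx₀⟩ := hX
      obtain ⟨i, hi⟩ := hγ.exists_pow_eq (mem_support.mp (hXs hx₀)) (mem_support.mp hw)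
      rw [Finset.mem_biUnion]
      refine ⟨X.image ⇑(γ^(i % orderOf γ)), Finset.mem_image.mpr
        ⟨i % orderOf γ, Finset.mem_range.mpr (Nat.mod_lt _ (orderOf_pos γ)), rfl⟩, ?_⟩
      refine Finset.mem_image.mpr ⟨x₀, hx₀, ?_⟩
      rw [pow_mod_orderOf, hi]
    · intro w hw
      rw [Finset.mem_biUnion] at hw
      obtain ⟨t, ht, hwt⟩ := hw
      obtain ⟨k, -, rfl⟩ := Finset.mem_image.mp ht
      obtain ⟨x, hx, rfl⟩ := Finset.mem_image.mp hwt
      exact (pow_apply_mem_support).mpr (hXs hx)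
  have hcard : γ.support.card = T.card * X.card := by
    rw [hcover, Finset.card_biUnion hdisj]
    apply Finset.sum_const_nat
    intro t ht
    obtain ⟨k, -, rfl⟩ := Finset.mem_image.mp ht
    exact Finset.card_image_of_injective _ (Equiv.injective _)
  exact ⟨T.card, by rw [hcard, mul_comm]⟩


lemma extract_two_cycles {σ : Equiv.Perm (Fin n)} {c d : ℕ} (h : σ.cycleType = {c, d}) :
    ∃ f g : Equiv.Perm (Fin n), f.IsCycle ∧ g.IsCycle ∧ Disjoint f.support g.support ∧
      σ = f * g ∧ ((f.support.card = c ∧ g.support.card = d) ∨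
        (f.support.card = d ∧ g.support.card = c)) := by
  classical
  have hcard : σ.cycleFactorsFinset.card = 2 := by
    have h2 := congrArg Multiset.card h
    rw [Equiv.Perm.cycleType_def, Multiset.card_map] at h2
    simpa using h2
  obtain ⟨f, g, hfg, hs⟩ := Finset.card_eq_two.mp hcard
  have hfmem : f ∈ σ.cycleFactorsFinset := by rw [hs]; simp
  have hgmem : g ∈ σ.cycleFactorsFinset := by rw [hs]; simp
  have hfc : f.IsCycle := (mem_cycleFactorsFinset_iff.mp hfmem).1
  have hgc : g.IsCycle := (mem_cycleFactorsFinset_iff.mp hgmem).1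
  have hdisj : Disjoint f.support g.support := by
    rw [← Equiv.Perm.disjoint_iff_disjoint_support]
    exact σ.cycleFactorsFinset_pairwise_disjoint (by exact_mod_cast hfmem)
      (by exact_mod_cast hgmem) hfg
  have hnotmem : f ∉ ({g} : Finset (Equiv.Perm (Fin n))) := Finset.notMem_singleton.mpr hfg
  have hprod : σ = f * g := by
    obtain ⟨hp, hnc⟩ := (Equiv.Perm.cycleFactorsFinset_eq_finset.mp hs).2
    rw [← hnc, Finset.noncommProd_insert_of_notMem _ _ _ _ hnotmem,
      Finset.noncommProd_singleton]
    rfl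
  have hval : ({f, g} : Finset (Equiv.Perm (Fin n))).val = f ::ₘ {g} := by
    rw [Finset.insert_val_of_notMem hnotmem]
    rfl
  have hmap : (c ::ₘ {d} : Multiset ℕ) = f.support.card ::ₘ {g.support.card} := by
    have := h.symm
    rw [Equiv.Perm.cycleType_def, hs, hval] at this
    simpa [Function.comp] using this
  rcases Multiset.cons_eq_cons.mp hmap with ⟨h3, h4⟩ | ⟨h3, cs, h4, h5⟩
  · exact ⟨f, g, hfc, hgc, hdisj, hprod, Or.inl ⟨h3.symm, (Multiset.singleton_inj.mp h4).symm⟩⟩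
  · have hcs : cs = 0 := by
      have hcc := congrArg Multiset.card h4
      simp only [Multiset.card_singleton, Multiset.card_cons] at hcc
      have : Multiset.card cs = 0 := by omega
      exact Multiset.card_eq_zero.mp this
    subst hcs
    have hd : f.support.card = d := by
      have : ({d} : Multiset ℕ) = {f.support.card} := by simpa using h4
      exact (Multiset.singleton_inj.mp this).symm
    have hc : g.support.card = c := by
      have : ({g.support.card} : Multiset ℕ) = {c} := by simpa using h5
      exact Multiset.singleton_inj.mp this
    exact ⟨f, g, hfc, hgc, hdisj, hprod, Or.inr ⟨hd, hc⟩⟩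


lemma image_compl (h : Equiv.Perm (Fin n)) (s : Finset (Fin n)) :
    sᶜ.image ⇑h = (s.image ⇑h)ᶜ := by
  ext z
  simp only [Finset.mem_image, Finset.mem_compl]
  constructor
  · rintro ⟨x, hx, rfl⟩ ⟨y, hy, hyx⟩
    exact hx ((h.injective hyx) ▸ hy)
  · intro hz
    exact ⟨h⁻¹ z, fun hc => hz ⟨h⁻¹ z, hc, by simp⟩, by simp⟩

lemma pow_fix_of_not_mem_support {γ : Equiv.Perm (Fin n)} {x : Fin n}
    (hx : x ∉ γ.support) (k : ℕ) : (γ^k) x = x := by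
  have h1 : γ x = x := notMem_support.mp hx
  induction k with
  | zero => simp
  | succ m ih => rw [pow_succ, Equiv.Perm.mul_apply, h1]; exact ih

lemma image_pow_support {γ : Equiv.Perm (Fin n)} (k : ℕ) :
    γ.support.image ⇑(γ^k) = γ.support := by
  apply Finset.eq_of_subset_of_card_le
  · intro z hz
    obtain ⟨x, hx, rfl⟩ := Finset.mem_image.mp hz
    exact pow_apply_mem_support.mpr hx
  · rw [Finset.card_image_of_injective _ (Equiv.injective _)]

lemma dist_sym {α β : Equiv.Perm (Fin n)} (hB : β.support = α.supportᶜ)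
    (h₁ h₂ : Equiv.Perm (Fin n)) :
    (α.support.image ⇑h₁ ∩ β.support.image ⇑h₂).card
      = (β.support.image ⇑h₁ ∩ α.support.image ⇑h₂).card := by
  have e1 : β.support.image ⇑h₁ = (α.support.image ⇑h₁)ᶜ := by rw [hB, image_compl]
  have e2 : β.support.image ⇑h₂ = (α.support.image ⇑h₂)ᶜ := by rw [hB, image_compl]
  rw [e1, e2]
  set s := α.support.image ⇑h₁ with hs
  set t := α.support.image ⇑h₂ with ht
  have hc : s.card = t.card := by
    rw [hs, ht, Finset.card_image_of_injective _ (Equiv.injective _),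
      Finset.card_image_of_injective _ (Equiv.injective _)]
  have d1 : s ∩ tᶜ = s \ t := by ext z; simp [Finset.mem_sdiff, and_comm]
  have d2 : sᶜ ∩ t = t \ s := by ext z; simp [Finset.mem_sdiff, and_comm]
  rw [d1, d2]
  have := Finset.card_sdiff_add_card_inter s t
  have := Finset.card_sdiff_add_card_inter t s
  rw [Finset.inter_comm t s] at this
  omega

lemma dvd_aux {H : Subgroup (Equiv.Perm (Fin n))} {γ δ : Equiv.Perm (Fin n)}
    (hγH : γ ∈ H) (hγc : γ.IsCycle) (hδsupp : δ.support = γ.supportᶜ)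
    {h : Equiv.Perm (Fin n)} (hh : h ∈ H) {e : ℕ} (he : 0 < e)
    (hX : (γ.support ∩ δ.support.image ⇑h).card = e)
    (hmin : ∀ h₁ ∈ H, ∀ h₂ ∈ H,
      0 < (δ.support.image ⇑h₁ ∩ γ.support.image ⇑h₂).card →
      e ≤ (δ.support.image ⇑h₁ ∩ γ.support.image ⇑h₂).card) :
    e ∣ γ.support.card := by
  classical
  set B := γ.support with hBdef
  set A := δ.support with hAdef
  have hAB : A = Bᶜ := hδsupp
  set B₂ := B.image ⇑h with hB2def
  set A₂ := A.image ⇑h with hA2def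
  have hA2c : A₂ = B₂ᶜ := by rw [hA2def, hB2def, hAB, image_compl]
  set X : Finset (Fin n) := B ∩ A₂ with hXdef
  have hXcard : X.card = e := hX
  have hXB : X ⊆ B := Finset.inter_subset_left
  have hXalt : X = B \ B₂ := by
    rw [hXdef, hA2c]
    ext z; simp [Finset.mem_sdiff, and_comm]
  have hTk : ∀ k : ℕ, (A₂ ∩ B.image ⇑((γ^k) * h)).card
      = e - (X ∩ X.image ⇑(γ^k)).card := by
    intro k
    have e0 : B.image ⇑((γ^k) * h) = B₂.image ⇑(γ^k) := by
      rw [hB2def, Finset.image_image]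
      rfl
    have e1 : B₂ = (B₂ \ B) ∪ (B₂ ∩ B) := (Finset.sdiff_union_inter B₂ B).symm
    have e2 : (B₂ \ B).image ⇑(γ^k) = B₂ \ B := by
      rw [Finset.image_congr (g := id) ?_, Finset.image_id]
      intro x hx
      exact pow_fix_of_not_mem_support (Finset.mem_sdiff.mp hx).2 k
    have e3 : B₂ ∩ B = B \ X := by
      rw [hXalt]
      ext z; simp only [Finset.mem_inter, Finset.mem_sdiff, not_and, not_not]
      constructor
      · rintro ⟨h1, h2⟩; exact ⟨h2, fun _ => h1⟩
      · rintro ⟨h1, h2⟩; exact ⟨h2 h1, h1⟩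
    have e4 : (B \ X).image ⇑(γ^k) = B \ X.image ⇑(γ^k) := by
      rw [Finset.image_sdiff _ _ (Equiv.injective _), image_pow_support]
    have e5 : A₂ ∩ (B₂ \ B) = ∅ := by
      rw [hA2c]
      ext z; simp only [Finset.mem_inter, Finset.mem_compl, Finset.mem_sdiff,
        Finset.notMem_empty, iff_false]
      rintro ⟨h1, h2, -⟩; exact h1 h2
    have e6 : A₂ ∩ B = X := by rw [hXdef, Finset.inter_comm]
    calc (A₂ ∩ B.image ⇑((γ^k) * h)).card
        = (A₂ ∩ ((B₂ \ B) ∪ (B₂ ∩ B)).image ⇑(γ^k)).card := by rw [e0, ← e1]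
      _ = ((A₂ ∩ (B₂ \ B)) ∪ (A₂ ∩ (B \ X.image ⇑(γ^k)))).card := by
          rw [Finset.image_union, e2, Finset.inter_union_distrib_left, e3, e4]
      _ = (A₂ ∩ (B \ X.image ⇑(γ^k))).card := by rw [e5, Finset.empty_union]
      _ = ((A₂ ∩ B) \ X.image ⇑(γ^k)).card := by rw [Finset.inter_sdiff_assoc]
      _ = (X \ X.image ⇑(γ^k)).card := by rw [e6]
      _ = e - (X ∩ X.image ⇑(γ^k)).card := by
          have := Finset.card_sdiff_add_card_inter X (X.image ⇑(γ^k))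
          omega
  have hblocks : ∀ k : ℕ, X.image ⇑(γ^k) = X ∨ Disjoint (X.image ⇑(γ^k)) X := by
    intro k
    have htk := hTk k
    set Y := X.image ⇑(γ^k) with hY
    have hYcard : Y.card = e := by
      rw [hY, Finset.card_image_of_injective _ (Equiv.injective _), hXcard]
    have hXY : (X ∩ Y).card ≤ e := by
      calc (X ∩ Y).card ≤ X.card := Finset.card_le_card Finset.inter_subset_left
        _ = e := hXcard
    by_cases h0 : (A₂ ∩ B.image ⇑((γ^k) * h)).card = 0
    · left
      have hc1 : (X ∩ Y).card = e := by omega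
      have hXYX : X ∩ Y = X :=
        Finset.eq_of_subset_of_card_le Finset.inter_subset_left (by omega)
      have hXYY : X ∩ Y = Y :=
        Finset.eq_of_subset_of_card_le Finset.inter_subset_right (by omega)
      rw [← hXYY, hXYX]
    · right
      have hpos : 0 < (A₂ ∩ B.image ⇑((γ^k) * h)).card := Nat.pos_of_ne_zero h0
      have hge := hmin h hh ((γ^k) * h) (H.mul_mem (H.pow_mem hγH k) hh) hpos
      rw [← hA2def] at hge
      have hc0 : (X ∩ Y).card = 0 := by omega
      have hempty : X ∩ Y = ∅ := Finset.card_eq_zero.mp hc0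
      exact Finset.disjoint_iff_inter_eq_empty.mpr (by rw [Finset.inter_comm]; exact hempty)
  exact hXcard ▸ card_dvd_of_block hγc
    (Finset.card_pos.mp (by rw [hXcard]; exact he)) hXB hblocks
lemma isThreeCycle_eq_t3 {τ : Equiv.Perm (Fin n)} (hτ : τ.IsThreeCycle) :
    ∃ a b c : Fin n, a ≠ b ∧ a ≠ c ∧ b ≠ c ∧ τ = t3 a b c := by
  have hcyc : τ.IsCycle := hτ.isCycle
  have hcard : τ.support.card = 3 := hτ.card_support
  obtain ⟨a, ha⟩ : ∃ a, a ∈ τ.support := Finset.card_pos.mp (by omega)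
  set b := τ a with hbdef
  set c := τ b with hcdef
  have hab : a ≠ b := (Equiv.Perm.mem_support.mp ha).symm
  have hbsup : b ∈ τ.support := Equiv.Perm.apply_mem_support.mpr ha
  have hbc : b ≠ c := (Equiv.Perm.mem_support.mp hbsup).symm
  have horder : orderOf τ = 3 := by rw [hcyc.orderOf, hcard]
  have hτ3 : τ ^ 3 = 1 := by rw [← horder]; exact pow_orderOf_eq_one τ
  have hca : τ c = a := by
    have h3 : τ c = (τ^3) a := by
      rw [hcdef, hbdef]
      simp [pow_succ, Equiv.Perm.mul_apply]
    rw [h3, hτ3]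
    rfl
  have haux : ∀ i : ℕ, (τ^i) a = a ∨ (τ^i) a = b ∨ (τ^i) a = c := by
    intro i
    induction i with
    | zero => left; rfl
    | succ m ih =>
      have hstep : (τ^(m+1)) a = τ ((τ^m) a) := by
        rw [pow_succ']
        rfl
      rcases ih with h | h | h
      · right; left; rw [hstep, h, ← hbdef]
      · right; right; rw [hstep, h, ← hcdef]
      · left; rw [hstep, h, hca]
  have hsupp_sub : τ.support ⊆ {a, b, c} := by
    intro x hx
    obtain ⟨i, hi⟩ := hcyc.exists_pow_eq (Equiv.Perm.mem_support.mp ha)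
      (Equiv.Perm.mem_support.mp hx)
    rcases haux i with h | h | h <;>
      · rw [← hi, h]
        simp
  have hac : a ≠ c := by
    intro hq
    have hsub2 : τ.support ⊆ {a, b} := by
      intro x hx
      have hx3 := hsupp_sub hx
      simp only [Finset.mem_insert, Finset.mem_singleton] at hx3 ⊢
      rcases hx3 with h | h | h
      · exact Or.inl h
      · exact Or.inr h
      · exact Or.inl (h.trans hq.symm)
    have hle : τ.support.card ≤ 2 :=
      le_trans (Finset.card_le_card hsub2) ((Finset.card_insert_le a {b}).trans (by simp))
    omega
  refine ⟨a, b, c, hab, hac, hbc, ?_⟩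
  ext z
  by_cases hza : z = a
  · subst hza; rw [t3_fst hab hac hbc]
  by_cases hzb : z = b
  · subst hzb; rw [t3_snd hab hac hbc]
  by_cases hzc : z = c
  · subst hzc
    rw [t3_thd hab hac hbc, hca]
  · rw [t3_oth hab hac hbc hza hzb hzc]
    refine congrArg _ (Equiv.Perm.notMem_support.mp fun hmem => ?_)
    have := hsupp_sub hmem
    simp [hza, hzb, hzc] at this

section KEY
variable {H : Subgroup (Equiv.Perm (Fin n))}

lemma key (htrans : ∀ a b : Fin n, ∃ h ∈ H, h a = b)
    {c d : ℕ} (hc : 1 < c) (hd : 1 < d) (hcd : Nat.Coprime c d) (hn : c + d = n)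
    {α β : Equiv.Perm (Fin n)} (hαH : α ∈ H) (hβH : β ∈ H)
    (hαc : α.IsCycle) (hβc : β.IsCycle)
    (hcA : α.support.card = c) (hBA : β.support = α.supportᶜ) :
    alternatingGroup (Fin n) ≤ H := by
  classical
  set A := α.support with hAdef
  set B := β.support with hBdef
  have hAB : A = Bᶜ := by rw [hBA, compl_compl]
  have hdB : B.card = d := by
    rw [hBA, Finset.card_compl, hcA, Fintype.card_fin]
    omega
  have hAne : A.Nonempty := Finset.card_pos.mp (by omega)
  have hBne : B.Nonempty := Finset.card_pos.mp (by omega)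
  -- minimal distance
  have hPex : ∃ e : ℕ, 0 < e ∧ ∃ h₁, h₁ ∈ H ∧ ∃ h₂, h₂ ∈ H ∧
      (A.image ⇑h₁ ∩ B.image ⇑h₂).card = e := by
    obtain ⟨a, ha⟩ := hAne
    obtain ⟨b, hb⟩ := hBne
    obtain ⟨h, hh, hba⟩ := htrans b a
    refine ⟨(A.image ⇑(1 : Equiv.Perm (Fin n)) ∩ B.image ⇑h).card, ?_, 1, H.one_mem, h, hh, rfl⟩
    apply Finset.card_pos.mpr
    exact ⟨a, Finset.mem_inter.mpr ⟨by simp [ha], Finset.mem_image.mpr ⟨b, hb, hba⟩⟩⟩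
  set e := Nat.find hPex with hedef
  obtain ⟨hepos, h₁, hh₁, h₂, hh₂, hreal⟩ := Nat.find_spec hPex
  have hminA : ∀ g₁ ∈ H, ∀ g₂ ∈ H,
      0 < (A.image ⇑g₁ ∩ B.image ⇑g₂).card →
      e ≤ (A.image ⇑g₁ ∩ B.image ⇑g₂).card := by
    intro g₁ hg₁ g₂ hg₂ hpos
    by_contra hlt
    exact Nat.find_min hPex (by omega) ⟨hpos, g₁, hg₁, g₂, hg₂, rfl⟩
  have hsym : ∀ g₁ g₂ : Equiv.Perm (Fin n),
      (A.image ⇑g₁ ∩ B.image ⇑g₂).card = (B.image ⇑g₁ ∩ A.image ⇑g₂).card :=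
    fun g₁ g₂ => dist_sym hBA g₁ g₂
  have hminB : ∀ g₁ ∈ H, ∀ g₂ ∈ H,
      0 < (B.image ⇑g₁ ∩ A.image ⇑g₂).card →
      e ≤ (B.image ⇑g₁ ∩ A.image ⇑g₂).card := by
    intro g₁ hg₁ g₂ hg₂ hpos
    rw [← hsym g₁ g₂] at hpos ⊢
    exact hminA g₁ hg₁ g₂ hg₂ hpos
  -- normalize realizer
  have hshift : A ∩ B.image ⇑(h₁⁻¹ * h₂) = (A.image ⇑h₁ ∩ B.image ⇑h₂).image ⇑h₁⁻¹ := by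
    ext z
    simp only [Finset.mem_inter, Finset.mem_image]
    constructor
    · rintro ⟨hzA, b, hbB, hbz⟩
      exact ⟨h₁ z, ⟨⟨z, hzA, rfl⟩, ⟨b, hbB, by
        simpa [Equiv.Perm.mul_apply] using congrArg (⇑h₁) hbz⟩⟩, by simp⟩
    · rintro ⟨w, ⟨⟨x, hxA, rfl⟩, ⟨b, hbB, hbw⟩⟩, rfl⟩
      refine ⟨by simpa using hxA, b, hbB, ?_⟩
      simp [← hbw, Equiv.Perm.mul_apply]
  set h := h₁⁻¹ * h₂ with hhdef
  have hhH : h ∈ H := H.mul_mem (H.inv_mem hh₁) hh₂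
  have hreal' : (A ∩ B.image ⇑h).card = e := by
    rw [hshift, Finset.card_image_of_injective _ (Equiv.injective _), hreal]
  -- e divides c and d
  have hdvdc : e ∣ c := by
    have := dvd_aux (γ := α) (δ := β) hαH hαc hBA hhH hepos hreal' hminB
    rwa [hcA] at this
  have hreal'' : (B ∩ A.image ⇑h).card = e := by
    have h1 := hsym 1 h
    simpa using h1.symm.trans (by simpa using hreal')
  have hdvdd : e ∣ d := by
    have := dvd_aux (γ := β) (δ := α) hβH hβc hAB hhH hepos hreal'' hminA
    rwa [hdB] at this
  have he1 : e = 1 := Nat.eq_one_of_dvd_coprimes hcd hdvdc hdvdd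
  have hrealBA : (B ∩ A.image ⇑h).card = 1 := by rw [hreal'']; exact he1
  rw [he1] at hreal'
  -- the special configuration
  obtain ⟨a, hsingle⟩ := Finset.card_eq_one.mp hreal'
  obtain ⟨a₁, hsingle₁⟩ := Finset.card_eq_one.mp hrealBA
  set γB := h * β * h⁻¹ with hγBdef
  have hγBH : γB ∈ H := H.mul_mem (H.mul_mem hhH hβH) (H.inv_mem hhH)
  have hγBsupp : γB.support = B.image ⇑h := by
    rw [hγBdef, Equiv.Perm.support_conj, Finset.map_eq_image]
    rfl
  have hinter : α.support ∩ γB.support = {a} := by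
    rw [hγBsupp, ← hAdef]
    exact hsingle
  have hz₀ : α * γB * α⁻¹ * γB⁻¹ = t3 a (α a) (γB a) := commutator_eq_t3 hinter
  have hz₀H : t3 a (α a) (γB a) ∈ H := by
    rw [← hz₀]
    exact H.mul_mem (H.mul_mem (H.mul_mem hαH hγBH) (H.inv_mem hαH)) (H.inv_mem hγBH)
  have hamem : a ∈ A ∩ B.image ⇑h := by rw [hsingle]; exact Finset.mem_singleton_self a
  have haA : a ∈ A := (Finset.mem_inter.mp hamem).1
  have haBh : a ∈ B.image ⇑h := (Finset.mem_inter.mp hamem).2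
  have ha₁mem : a₁ ∈ B ∩ A.image ⇑h := by rw [hsingle₁]; exact Finset.mem_singleton_self a₁
  have ha₁B : a₁ ∈ B := (Finset.mem_inter.mp ha₁mem).1
  have ha₁Ah : a₁ ∈ A.image ⇑h := (Finset.mem_inter.mp ha₁mem).2
  have hp1 : α a ≠ a := Equiv.Perm.mem_support.mp (hAdef ▸ haA)
  have haγB : a ∈ γB.support := by rw [hγBsupp]; exact haBh
  have hp2 : γB a ≠ a := Equiv.Perm.mem_support.mp haγB
  have hp1A : α a ∈ A := by
    rw [hAdef]
    exact Equiv.Perm.apply_mem_support.mpr (hAdef ▸ haA)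
  have hp2B : γB a ∈ B.image ⇑h := by
    rw [← hγBsupp]
    exact Equiv.Perm.apply_mem_support.mpr haγB
  have hp12 : α a ≠ γB a := by
    intro hq
    exact hp1 (Finset.mem_singleton.mp
      (hsingle ▸ Finset.mem_inter.mpr ⟨hp1A, hq ▸ hp2B⟩))
  have hanotB : a ∉ B := by
    rw [hAB] at haA
    exact Finset.mem_compl.mp haA
  have hAimg : A.image ⇑h = (B.image ⇑h)ᶜ := by rw [hAB, image_compl]
  -- reachability from a₁ in the stabilizer of a
  have hreach : ∀ z, z ≠ a → ∃ k, k ∈ H ∧ k a = a ∧ k a₁ = z := by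
    intro z hz
    by_cases hzB : z ∈ B
    · obtain ⟨j, hj⟩ := hβc.exists_pow_eq
        (Equiv.Perm.mem_support.mp (hBdef ▸ ha₁B))
        (Equiv.Perm.mem_support.mp (hBdef ▸ hzB))
      refine ⟨β^j, H.pow_mem hβH j, ?_, hj⟩
      exact pow_fix_of_not_mem_support (by rw [← hBdef]; exact hanotB) j
    · have hzA : z ∈ A := by rw [hAB]; exact Finset.mem_compl.mpr hzB
      have hzAh : z ∈ A.image ⇑h := by
        rw [hAimg]
        apply Finset.mem_compl.mpr
        intro hzBh
        exact hz (Finset.mem_singleton.mp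
          (hsingle ▸ Finset.mem_inter.mpr ⟨hzA, hzBh⟩))
      obtain ⟨x₁, hx₁A, hx₁⟩ := Finset.mem_image.mp ha₁Ah
      obtain ⟨xz, hxzA, hxz⟩ := Finset.mem_image.mp hzAh
      obtain ⟨j, hj⟩ := hαc.exists_pow_eq
        (Equiv.Perm.mem_support.mp (hAdef ▸ hx₁A))
        (Equiv.Perm.mem_support.mp (hAdef ▸ hxzA))
      refine ⟨h * α^j * h⁻¹, H.mul_mem (H.mul_mem hhH (H.pow_mem hαH j)) (H.inv_mem hhH),
        ?_, ?_⟩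
      · obtain ⟨b₀, hb₀B, hb₀⟩ := Finset.mem_image.mp haBh
        have hb₀' : h⁻¹ a = b₀ := by rw [← hb₀]; simp
        have hb₀A : b₀ ∉ α.support := by
          rw [← hAdef, hAB]
          simpa using hb₀B
        simp only [Equiv.Perm.mul_apply, hb₀', pow_fix_of_not_mem_support hb₀A j, hb₀]
      · simp only [Equiv.Perm.mul_apply, ← hx₁]
        rw [show h⁻¹ (h x₁) = x₁ by simp, hj, hxz]
  have hstab : ∀ z w, z ≠ a → w ≠ a → ∃ k, k ∈ H ∧ k a = a ∧ k z = w := by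
    intro z w hz hw
    obtain ⟨k₁, hk₁H, hk₁a, hk₁⟩ := hreach z hz
    obtain ⟨k₂, hk₂H, hk₂a, hk₂⟩ := hreach w hw
    have hk₁inv : k₁⁻¹ a = a := (Equiv.Perm.inv_eq_iff_eq (f := k₁)).mpr hk₁a.symm
    have hk₁invz : k₁⁻¹ z = a₁ := (Equiv.Perm.inv_eq_iff_eq (f := k₁)).mpr hk₁.symm
    refine ⟨k₂ * k₁⁻¹, H.mul_mem hk₂H (H.inv_mem hk₁H), ?_, ?_⟩
    · rw [Equiv.Perm.mul_apply, hk₁inv, hk₂a]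
    · rw [Equiv.Perm.mul_apply, hk₁invz, hk₂]
  have htwo : ∀ u v u' v', u ≠ v → u' ≠ v' → ∃ k, k ∈ H ∧ k u = u' ∧ k v = v' := by
    intro u v u' v' huv hu'v'
    obtain ⟨g₁, hg₁H, hg₁⟩ := htrans u a
    obtain ⟨g₂, hg₂H, hg₂⟩ := htrans u' a
    have hz : g₁ v ≠ a := by
      rw [← hg₁]
      exact fun hq => huv (g₁.injective hq).symm
    have hw : g₂ v' ≠ a := by
      rw [← hg₂]
      exact fun hq => hu'v' (g₂.injective hq).symm
    obtain ⟨k₀, hk₀H, hk₀a, hk₀⟩ := hstab (g₁ v) (g₂ v') hz hw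
    have hg₂inv : g₂⁻¹ a = u' := (Equiv.Perm.inv_eq_iff_eq (f := g₂)).mpr hg₂.symm
    refine ⟨g₂⁻¹ * k₀ * g₁, H.mul_mem (H.mul_mem (H.inv_mem hg₂H) hk₀H) hg₁H, ?_, ?_⟩
    · rw [Equiv.Perm.mul_apply, Equiv.Perm.mul_apply, hg₁, hk₀a, hg₂inv]
    · rw [Equiv.Perm.mul_apply, Equiv.Perm.mul_apply, hk₀]
      simp
  have ht3pair : ∀ u v, u ≠ v → ∃ w, w ≠ u ∧ w ≠ v ∧ t3 u v w ∈ H := by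
    intro u v huv
    obtain ⟨k, hkH, hk1, hk2⟩ := htwo a (α a) u v (Ne.symm hp1) huv
    refine ⟨k (γB a), ?_, ?_, ?_⟩
    · rw [← hk1]
      exact fun hq => hp2 (k.injective hq)
    · rw [← hk2]
      exact fun hq => hp12 (k.injective hq).symm
    · have hmem : k * t3 a (α a) (γB a) * k⁻¹ ∈ H :=
        H.mul_mem (H.mul_mem hkH hz₀H) (H.inv_mem hkH)
      rwa [t3_conj, hk1, hk2] at hmem
  have hall : ∀ u v w, u ≠ v → u ≠ w → v ≠ w → t3 u v w ∈ H := by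
    intro u v w huv huw hvw
    obtain ⟨x, hxu, hxv, ht1⟩ := ht3pair u v huv
    by_cases hxw : x = w
    · rwa [hxw] at ht1
    obtain ⟨r, hrx, hrw, hsH⟩ := ht3pair x w hxw
    by_cases hru : r = u
    · rw [hru] at hsH
      have hconj : t3 x w u * t3 u v x * (t3 x w u)⁻¹ = t3 x v w := by
        rw [t3_conj, t3_thd hxw hxu (Ne.symm huw),
          t3_oth hxw hxu (Ne.symm huw) (Ne.symm hxv) hvw (Ne.symm huv),
          t3_fst hxw hxu (Ne.symm huw)]
      have hmem : t3 x v w ∈ H := by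
        rw [← hconj]
        exact H.mul_mem (H.mul_mem hsH ht1) (H.inv_mem hsH)
      have := H.mul_mem ht1 hmem
      rwa [t3_mul_1 huv huw (Ne.symm hxu) hvw (Ne.symm hxv) (fun hq => hxw hq.symm)] at this
    by_cases hrv : r = v
    · rw [hrv] at hsH
      have hconj : t3 x w v * t3 u v x * (t3 x w v)⁻¹ = t3 u x w := by
        rw [t3_conj, t3_oth hxw hxv (Ne.symm hvw) (Ne.symm hxu) huw huv,
          t3_thd hxw hxv (Ne.symm hvw), t3_fst hxw hxv (Ne.symm hvw)]
      have hmem : t3 u x w ∈ H := by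
        rw [← hconj]
        exact H.mul_mem (H.mul_mem hsH ht1) (H.inv_mem hsH)
      have := H.mul_mem hmem ht1
      rwa [t3_mul_2 huv huw (Ne.symm hxu) hvw (Ne.symm hxv) (fun hq => hxw hq.symm)] at this
    · have hconj : t3 x w r * t3 u v x * (t3 x w r)⁻¹ = t3 u v w := by
        rw [t3_conj, t3_oth hxw (Ne.symm hrx) (Ne.symm hrw) (Ne.symm hxu) huw
          (fun hq => hru hq.symm),
          t3_oth hxw (Ne.symm hrx) (Ne.symm hrw) (Ne.symm hxv) hvw (fun hq => hrv hq.symm),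
          t3_fst hxw (Ne.symm hrx) (Ne.symm hrw)]
      rw [← hconj]
      exact H.mul_mem (H.mul_mem hsH ht1) (H.inv_mem hsH)
  rw [← Equiv.Perm.closure_three_cycles_eq_alternating]
  apply (Subgroup.closure_le H).mpr
  intro τ hτ
  obtain ⟨a', b', c', hab', hac', hbc', rfl⟩ := isThreeCycle_eq_t3 hτ
  exact hall a' b' c' hab' hac' hbc'

end KEY

lemma build {H : Subgroup (Equiv.Perm (Fin n))}
    (htrans : ∀ a b : Fin n, ∃ h ∈ H, h a = b)
    {c d : ℕ} (hc : 1 < c) (hd : 1 < d) (hcd : Nat.Coprime c d) (hn : c + d = n)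
    {σ f g : Equiv.Perm (Fin n)} (hσH : σ ∈ H)
    (hfc : f.IsCycle) (hgc : g.IsCycle) (hdisj : Disjoint f.support g.support)
    (hprod : σ = f * g) (hfcard : f.support.card = c) (hgcard : g.support.card = d) :
    alternatingGroup (Fin n) ≤ H := by
  have hcomm : Commute f g :=
    (Equiv.Perm.disjoint_iff_disjoint_support.mpr hdisj).commute
  have horderf : orderOf f = c := by rw [hfc.orderOf, hfcard]
  have horderg : orderOf g = d := by rw [hgc.orderOf, hgcard]
  have hgd : g ^ d = 1 := by rw [← horderg]; exact pow_orderOf_eq_one g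
  have hfcc : f ^ c = 1 := by rw [← horderf]; exact pow_orderOf_eq_one f
  have hdc : Nat.Coprime d c := hcd.symm
  have hcdd : Nat.Coprime c d := hcd
  set α := σ ^ d with hα
  set β := σ ^ c with hβ
  have hαf : α = f ^ d := by rw [hα, hprod, hcomm.mul_pow, hgd, mul_one]
  have hβg : β = g ^ c := by rw [hβ, hprod, hcomm.mul_pow, hfcc, one_mul]
  have hαH : α ∈ H := H.pow_mem hσH d
  have hβH : β ∈ H := H.pow_mem hσH c
  have hαcyc : α.IsCycle := by
    rw [hαf]
    exact hfc.pow_iff.mpr (by rw [horderf]; exact hdc)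
  have hβcyc : β.IsCycle := by
    rw [hβg]
    exact hgc.pow_iff.mpr (by rw [horderg]; exact hcdd)
  have hαsupp : α.support = f.support := by
    rw [hαf]
    exact Equiv.Perm.support_pow_coprime (by rw [horderf]; exact hdc)
  have hβsupp : β.support = g.support := by
    rw [hβg]
    exact Equiv.Perm.support_pow_coprime (by rw [horderg]; exact hcdd)
  have hBA : β.support = α.supportᶜ := by
    rw [hαsupp, hβsupp]
    apply Finset.eq_of_subset_of_card_le
    · intro x hxg
      exact Finset.mem_compl.mpr (fun hxf => (Finset.disjoint_left.mp hdisj hxf) hxg)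
    · rw [Finset.card_compl, hfcard, hgcard, Fintype.card_fin]
      omega
  exact key htrans hc hd hcd hn hαH hβH hαcyc hβcyc (by rw [hαsupp, hfcard]) hBA

/-- Jones' lemma: a transitive subgroup of S_n containing a permutation whose cycle structure
is two cycles of coprime lengths c, d > 1 with c + d = n contains A_n. -/
theorem jones_two_coprime_cycles (n : ℕ) (H : Subgroup (Equiv.Perm (Fin n)))
    (htrans : ∀ a b : Fin n, ∃ h ∈ H, h a = b)
    (c d : ℕ) (hc : 1 < c) (hd : 1 < d) (hcd : Nat.Coprime c d) (hn : c + d = n)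
    (hσ : ∃ σ ∈ H, σ.cycleType = {c, d}) :
    alternatingGroup (Fin n) ≤ H := by
  obtain ⟨σ, hσH, hσtype⟩ := hσ
  obtain ⟨f, g, hfc, hgc, hdisj, hprod, hcases⟩ := extract_two_cycles hσtype
  rcases hcases with ⟨h1, h2⟩ | ⟨h1, h2⟩
  · exact build htrans hc hd hcd hn hσH hfc hgc hdisj hprod h1 h2
  · exact build htrans hd hc hcd.symm (by omega) hσH hfc hgc hdisj hprod h1 h2
end

section
/- Let H ≤ S_n be a transitive permutation group containing an m-cycle with m > n/2 and gcd(m, n) = 1. Then H is primitive. -/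
/-- A subgroup of Sym(α) is primitive if it is transitive and every block
(a set mapped by each element either to itself or to a disjoint set) is trivial. -/
def IsPrimitivePermGroup {α : Type*} (H : Subgroup (Equiv.Perm α)) : Prop :=
  (∀ a b : α, ∃ h ∈ H, h a = b) ∧
  ∀ B : Set α, (∀ σ ∈ H, σ '' B = B ∨ Disjoint (σ '' B) B) →
    B.Subsingleton ∨ B = Set.univ

/-- A transitive subgroup of S_n containing an m-cycle with m > n/2 and gcd(m,n)=1
is primitive. -/
theorem primitive_of_long_coprime_cycle (n : ℕ) (H : Subgroup (Equiv.Perm (Fin n)))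
    (htrans : ∀ a b : Fin n, ∃ h ∈ H, h a = b)
    (m : ℕ) (hm : n < 2 * m) (hmn : Nat.Coprime m n)
    (hσ : ∃ σ ∈ H, σ.IsCycle ∧ σ.support.card = m) :
    IsPrimitivePermGroup H := by
  classical
  refine ⟨htrans, ?_⟩
  intro B hB
  by_contra hcon
  push_neg at hcon
  obtain ⟨hBns, hBuniv⟩ := hcon
  obtain ⟨a, ha, b, hb, hab⟩ := hBns
  obtain ⟨c, hcH, hcyc, hcard⟩ := hσ
  set Bf : Finset (Fin n) := B.toFinset with hBfdef
  have haf : a ∈ Bf := Set.mem_toFinset.2 ha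
  have hbf : b ∈ Bf := Set.mem_toFinset.2 hb
  set d : ℕ := Bf.card with hd
  have hd2 : 2 ≤ d := by
    have : ({a, b} : Finset (Fin n)) ⊆ Bf := by
      intro x hx
      rcases Finset.mem_insert.1 hx with rfl | hx
      · exact haf
      · rw [Finset.mem_singleton] at hx; subst hx; exact hbf
    calc 2 = ({a, b} : Finset (Fin n)).card := (Finset.card_pair hab).symm
    _ ≤ Bf.card := Finset.card_le_card this
  -- block condition in Finset form
  have hBf : ∀ σ ∈ H, Finset.image σ Bf = Bf ∨ Disjoint (Finset.image σ Bf) Bf := by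
    intro σ hσmem
    rcases hB σ hσmem with h | h
    · left
      apply Finset.coe_injective
      rw [Finset.coe_image, Set.coe_toFinset, h]
    · right
      rw [← Finset.disjoint_coe, Finset.coe_image, Set.coe_toFinset]
      exact h
  -- translates are equal or disjoint
  have key : ∀ u ∈ H, ∀ v ∈ H, Finset.image u Bf = Finset.image v Bf ∨
      Disjoint (Finset.image u Bf) (Finset.image v Bf) := by
    intro u hu v hv
    have hσmem : v⁻¹ * u ∈ H := mul_mem (inv_mem hv) hu
    have himg : Finset.image v (Finset.image (⇑(v⁻¹ * u)) Bf) = Finset.image u Bf := by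
      rw [Finset.image_image, ← Equiv.Perm.coe_mul, mul_inv_cancel_left]
    rcases hBf _ hσmem with h | h
    · left
      rw [← himg, h]
    · right
      rw [← himg]
      exact (Finset.disjoint_image (Equiv.injective v)).2 h
  -- choice of translates
  choose g hgH hg using htrans
  set T : Fin n → Finset (Fin n) := fun x => Finset.image (g a x) Bf with hT
  have hTmem : ∀ x, x ∈ T x := fun x =>
    Finset.mem_image.2 ⟨a, haf, hg a x⟩
  have hTor : ∀ x y, T x = T y ∨ Disjoint (T x) (T y) := fun x y =>
    key _ (hgH a x) _ (hgH a y)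
  have hTcard : ∀ x, (T x).card = d := fun x =>
    Finset.card_image_of_injective _ (Equiv.injective _)
  have hdn : d < n := by
    have hne : Bf ≠ Finset.univ := by
      intro h
      apply hBuniv
      have h2 : (Bf : Set (Fin n)) = Set.univ := by rw [h, Finset.coe_univ]
      rwa [hBfdef, Set.coe_toFinset] at h2
    have hle := Finset.card_le_card (Finset.subset_univ Bf)
    rw [Finset.card_univ, Fintype.card_fin] at hle
    rcases lt_or_eq_of_le hle with h | h
    · exact h
    · exact absurd (Finset.eq_univ_of_card Bf (by rw [h, Fintype.card_fin])) hne
  -- c maps translates to translates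
  have hcT : ∀ x, Finset.image c (T x) = T (c x) := by
    intro x
    have h1 : Finset.image c (T x) = Finset.image (⇑(c * g a x)) Bf := by
      rw [hT, Finset.image_image, Equiv.Perm.coe_mul]
    rcases key _ (mul_mem hcH (hgH a x)) _ (hgH a (c x)) with h | h
    · rw [h1, h]
    · exfalso
      have h2 : c x ∈ Finset.image (⇑(c * g a x)) Bf := by
        rw [← h1]
        exact Finset.mem_image.2 ⟨x, hTmem x, rfl⟩
      exact Finset.disjoint_left.1 h h2 (hTmem (c x))
  -- moved translates are inside the support
  have hmoved : ∀ x, T (c x) ≠ T x → T x ⊆ c.support := by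
    intro x hne y hy
    rw [Equiv.Perm.mem_support]
    intro hcy
    have hdisj : Disjoint (T (c x)) (T x) := (hTor (c x) x).resolve_left hne
    have : c y ∈ T (c x) := by
      rw [← hcT x]
      exact Finset.mem_image.2 ⟨y, hy, rfl⟩
    rw [hcy] at this
    exact Finset.disjoint_left.1 hdisj this hy
  -- a fixed translate meeting the support is impossible
  have hfix : ∀ x ∈ c.support, T (c x) ≠ T x := by
    intro x hx heq
    have hinv : Finset.image c (T x) = T x := by rw [hcT x, heq]
    have hsub : c.support ⊆ T x := by
      intro z hz
      obtain ⟨i, hi⟩ := hcyc.exists_pow_eq (Equiv.Perm.mem_support.1 hx)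
        (Equiv.Perm.mem_support.1 hz)
      rw [← hi]
      clear hi
      induction i with
      | zero => simpa using hTmem x
      | succ j ih =>
        rw [pow_succ', Equiv.Perm.mul_apply, ← hinv]
        exact Finset.mem_image_of_mem (⇑c) ih
    -- so m ≤ d, with a second disjoint translate: 2d ≤ n < 2m ≤ 2d
    have hm_le : m ≤ d := by
      rw [← hcard, ← hTcard x]
      exact Finset.card_le_card hsub
    have hlt : (T x).card < n := by rw [hTcard]; exact hdn
    obtain ⟨y, hy⟩ : ∃ y, y ∉ T x := by
      by_contra h
      push_neg at h
      have huniv : T x = Finset.univ := Finset.eq_univ_iff_forall.2 h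
      rw [huniv, Finset.card_univ, Fintype.card_fin] at hlt
      omega
    have hne : T y ≠ T x := fun h => hy (h ▸ hTmem y)
    have hdisj : Disjoint (T y) (T x) := (hTor y x).resolve_left hne
    have hcup : (T y ∪ T x).card = 2 * d := by
      rw [Finset.card_union_of_disjoint hdisj, hTcard, hTcard]; ring
    have : (T y ∪ T x).card ≤ n := by
      have := Finset.card_le_card (Finset.subset_univ (T y ∪ T x))
      rwa [Finset.card_univ, Fintype.card_fin] at this
    omega
  -- the set of all translates
  set Tset : Finset (Finset (Fin n)) := Finset.univ.image T with hTset
  have hTsetdisj : ∀ s ∈ Tset, ∀ t ∈ Tset, s ≠ t → Disjoint s t := by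
    intro s hs t ht hst
    obtain ⟨x, -, rfl⟩ := Finset.mem_image.1 hs
    obtain ⟨y, -, rfl⟩ := Finset.mem_image.1 ht
    exact (hTor x y).resolve_left hst
  have hunion : Tset.biUnion (fun s => s) = Finset.univ := by
    apply Finset.eq_univ_of_forall
    intro x
    exact Finset.mem_biUnion.2 ⟨T x, Finset.mem_image.2 ⟨x, Finset.mem_univ x, rfl⟩, hTmem x⟩
  have hn_eq : n = Tset.card * d := by
    have hcU : (Tset.biUnion (fun s => s)).card = ∑ u ∈ Tset, u.card :=
      Finset.card_biUnion hTsetdisj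
    rw [hunion, Finset.card_univ, Fintype.card_fin] at hcU
    refine hcU.trans ?_
    rw [Finset.sum_congr rfl (fun s hs => ?_), Finset.sum_const, smul_eq_mul]
    obtain ⟨x, -, rfl⟩ := Finset.mem_image.1 hs
    exact hTcard x
  -- moved translates
  set Mset : Finset (Finset (Fin n)) := Tset.filter (fun s => Finset.image c s ≠ s) with hMset
  have hsupp : c.support = Mset.biUnion (fun s => s) := by
    apply Finset.Subset.antisymm
    · intro x hx
      refine Finset.mem_biUnion.2 ⟨T x, ?_, hTmem x⟩
      refine Finset.mem_filter.2 ⟨Finset.mem_image.2 ⟨x, Finset.mem_univ x, rfl⟩, ?_⟩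
      rw [hcT x]
      exact hfix x hx
    · intro y hy
      obtain ⟨s, hs, hys⟩ := Finset.mem_biUnion.1 hy
      obtain ⟨hsT, hsmov⟩ := Finset.mem_filter.1 hs
      obtain ⟨x, -, rfl⟩ := Finset.mem_image.1 hsT
      rw [hcT x] at hsmov
      exact hmoved x hsmov hys
  have hm_eq : m = Mset.card * d := by
    have hcM : (Mset.biUnion (fun s => s)).card = ∑ u ∈ Mset, u.card :=
      Finset.card_biUnion (fun s hs t ht hst =>
        hTsetdisj s (Finset.mem_filter.1 hs).1 t (Finset.mem_filter.1 ht).1 hst)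
    have h1 : m = ∑ u ∈ Mset, u.card := by rw [← hcard, hsupp]; exact hcM
    refine h1.trans ?_
    rw [Finset.sum_congr rfl (fun s hs => ?_), Finset.sum_const, smul_eq_mul]
    obtain ⟨x, -, rfl⟩ := Finset.mem_image.1 (Finset.mem_filter.1 hs).1
    exact hTcard x
  have hddvd : d ∣ Nat.gcd m n := Nat.dvd_gcd ⟨Mset.card, by rw [mul_comm]; exact hm_eq⟩
    ⟨Tset.card, by rw [mul_comm]; exact hn_eq⟩
  rw [hmn] at hddvd
  have := Nat.le_of_dvd one_pos hddvd
  omega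
end

section
/- For n = 2r with r even, the permutations x = (1,2,...,2r−1) and y = (2r,2r−1,...,2) are both even, their product xy is the 3-cycle (1,2r,2r−1), and ⟨x,y⟩ = A_{2r}. -/
set_option maxHeartbeats 1000000


/-- For n = 2r with r even, x = (1,…,2r−1) and y = (2r,2r−1,…,2) (0-indexed on Fin (2r))
are even, the product xy (applying x first) is the 3-cycle (1,2r,2r−1), and ⟨x,y⟩ = A_{2r}. -/
theorem explicit_generators_with_three_cycle (r : ℕ) (hr : 0 < r) (hre : Even r)
    (x y : Equiv.Perm (Fin (2 * r)))
    (hx : ∀ i : Fin (2 * r), (x i : ℕ) =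
      if (i : ℕ) < 2 * r - 2 then (i : ℕ) + 1
      else if (i : ℕ) = 2 * r - 2 then 0
      else (i : ℕ))
    (hy : ∀ i : Fin (2 * r), (y i : ℕ) =
      if (i : ℕ) = 0 then 0
      else if (i : ℕ) = 1 then 2 * r - 1
      else (i : ℕ) - 1) :
    x ∈ alternatingGroup (Fin (2 * r)) ∧
    y ∈ alternatingGroup (Fin (2 * r)) ∧
    (∀ i : Fin (2 * r), ((y * x) i : ℕ) =
      if (i : ℕ) = 0 then 2 * r - 1
      else if (i : ℕ) = 2 * r - 1 then 2 * r - 2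
      else if (i : ℕ) = 2 * r - 2 then 0
      else (i : ℕ)) ∧
    Subgroup.closure {x, y} = alternatingGroup (Fin (2 * r)) := by
  have hr2 : 2 ≤ r := by
    rcases hre with ⟨k, hk⟩; omega
  obtain ⟨m, hm⟩ : ∃ m, 2 * r = m + 1 := ⟨2 * r - 1, by omega⟩
  have hm3 : 3 ≤ m := by omega
  revert x y
  rw [hm]
  intro x y hx hy
  -- key points
  set t : Fin (m + 1) := ⟨m, by omega⟩ with ht_def
  set w : Fin (m + 1) := ⟨m - 1, by omega⟩ with hw_def
  set v0 : Fin (m + 1) := ⟨0, by omega⟩ with hv0_def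
  have ht : (t : ℕ) = m := rfl
  have hw : (w : ℕ) = m - 1 := rfl
  have hv0 : (v0 : ℕ) = 0 := rfl
  -- x is cycleRange w
  have hxcr : x = Fin.cycleRange w := by
    ext i
    rcases lt_trichotomy i w with h | h | h
    · rw [Fin.cycleRange_of_lt h]
      have hiw : (i : ℕ) < m - 1 := h
      rw [hx i, if_pos (by omega), Fin.val_add_one_of_lt (by
        simp only [Fin.lt_iff_val_lt_val, Fin.val_last]; omega)]
    · rw [h, Fin.cycleRange_self]
      rw [hx w, if_neg (by omega), if_pos (by omega)]
      rfl
    · rw [Fin.cycleRange_of_gt h]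
      have hiw : (m : ℕ) - 1 < (i : ℕ) := h
      rw [hx i, if_neg (by omega), if_neg (by omega)]
  have hxA : x ∈ alternatingGroup (Fin (m + 1)) := by
    rw [Equiv.Perm.mem_alternatingGroup, hxcr, Fin.sign_cycleRange]
    exact Even.neg_one_pow (by rw [hw]; exact ⟨r - 1, by omega⟩)
  -- the rotation g
  set g : Equiv.Perm (Fin (m + 1)) := Equiv.addLeft (1 : Fin (m + 1)) with hg_def
  have hg : ∀ v : Fin (m + 1), (g v : ℕ) = if (v : ℕ) = m then 0 else (v : ℕ) + 1 := by
    intro v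
    have h1 : ((1 : Fin (m + 1)) : ℕ) = 1 := by
      rw [Fin.val_one']; exact Nat.mod_eq_of_lt (by omega)
    have : (g v : ℕ) = (1 + (v : ℕ)) % (m + 1) := by
      simp only [hg_def, Equiv.coe_addLeft, Fin.add_def, h1]
    rw [this]
    rcases eq_or_ne (v : ℕ) m with hv | hv
    · rw [hv, if_pos rfl, Nat.add_comm, Nat.mod_self]
    · rw [if_neg hv, Nat.mod_eq_of_lt (by have := v.is_lt; omega)]
      omega
  -- y is conjugate to x⁻¹ by g
  have hconj : y * g * x = g := by
    ext i
    have h1 := hx i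
    have h2 := hg (x i)
    have h3 := hy (g (x i))
    have h4 := hg i
    have b1 : (i : ℕ) < m + 1 := i.is_lt
    have b2 : ((x i) : ℕ) < m + 1 := (x i).is_lt
    have b3 : ((g (x i)) : ℕ) < m + 1 := (g (x i)).is_lt
    simp only [Equiv.Perm.mul_apply]
    rw [h3, h4]
    split_ifs at h1 h2 ⊢ <;> omega
  have hyeq : y = g * x⁻¹ * g⁻¹ := by
    calc y = (y * g * x) * x⁻¹ * g⁻¹ := by group
    _ = g * x⁻¹ * g⁻¹ := by rw [hconj]
  have hyA : y ∈ alternatingGroup (Fin (m + 1)) := by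
    have hsx : Equiv.Perm.sign x = 1 := Equiv.Perm.mem_alternatingGroup.1 hxA
    rw [Equiv.Perm.mem_alternatingGroup, hyeq, Equiv.Perm.sign_mul, Equiv.Perm.sign_mul,
      Equiv.Perm.sign_inv, Equiv.Perm.sign_inv, hsx]
    simp
  -- the three-cycle z = y * x
  have hz : ∀ i : Fin (m + 1), ((y * x) i : ℕ) =
      if (i : ℕ) = 0 then m + 1 - 1
      else if (i : ℕ) = m + 1 - 1 then m + 1 - 2
      else if (i : ℕ) = m + 1 - 2 then 0
      else (i : ℕ) := by
    intro i
    have h1 := hx i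
    have h2 := hy (x i)
    have b1 : (i : ℕ) < m + 1 := i.is_lt
    have b2 : ((x i) : ℕ) < m + 1 := (x i).is_lt
    simp only [Equiv.Perm.mul_apply]
    rw [h2]
    split_ifs at h1 ⊢ <;> omega
  -- values of swaps
  have sv : ∀ a b i : Fin (m + 1), ((Equiv.swap a b) i : ℕ) =
      if (i : ℕ) = (a : ℕ) then (b : ℕ) else if (i : ℕ) = (b : ℕ) then (a : ℕ) else (i : ℕ) := by
    intro a b i
    rcases eq_or_ne i a with rfl | h1
    · rw [Equiv.swap_apply_left, if_pos rfl]
    · rcases eq_or_ne i b with rfl | h2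
      · rw [Equiv.swap_apply_right, if_neg (fun h => h1 (Fin.val_injective h)), if_pos rfl]
      · rw [Equiv.swap_apply_of_ne_of_ne h1 h2, if_neg (fun h => h1 (Fin.val_injective h)),
          if_neg (fun h => h2 (Fin.val_injective h))]
  -- z as a product of two star swaps
  have hzswap : y * x = Equiv.swap t v0 * Equiv.swap t w := by
    ext i
    have h1 := hz i
    have h2 := sv t w i
    have h3 := sv t v0 (Equiv.swap t w i)
    have b1 : (i : ℕ) < m + 1 := i.is_lt
    rw [h1]
    simp only [Equiv.Perm.mul_apply]
    rw [h3]
    simp only [ht, hw, hv0] at h2 ⊢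
    split_ifs at h2 ⊢ <;> omega
  have hxH : x ∈ Subgroup.closure ({x, y} : Set (Equiv.Perm (Fin (m + 1)))) :=
    Subgroup.subset_closure (Set.mem_insert _ _)
  have hyH : y ∈ Subgroup.closure ({x, y} : Set (Equiv.Perm (Fin (m + 1)))) :=
    Subgroup.subset_closure (Set.mem_insert_of_mem _ rfl)
  have hxt : x t = t := by
    apply Fin.val_injective
    rw [hx t, ht, if_neg (by omega), if_neg (by omega)]
  have hxw : x w = v0 := by
    apply Fin.val_injective
    rw [hx w, hw, hv0, if_neg (by omega), if_pos (by omega)]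
  have hpow : ∀ j : ℕ, j ≤ m - 1 → (((x ^ (j + 1)) w : Fin (m + 1)) : ℕ) = j := by
    intro j
    induction j with
    | zero => intro _; rw [pow_one, hxw]
    | succ j ih =>
      intro hj
      have e1 : (x ^ (j + 1 + 1)) w = x ((x ^ (j + 1)) w) := by
        rw [pow_succ' x (j + 1), Equiv.Perm.mul_apply]
      rw [e1, hx ((x ^ (j + 1)) w), ih (by omega), if_pos (by omega)]
  -- iterated pairs
  have Hk : ∀ k : ℕ, Equiv.swap t ((x ^ (k + 1)) w) * Equiv.swap t w ∈
      Subgroup.closure ({x, y} : Set (Equiv.Perm (Fin (m + 1)))) := by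
    intro k
    induction k with
    | zero =>
      rw [pow_one, hxw, ← hzswap]
      exact mul_mem hyH hxH
    | succ k ih =>
      have e : ∀ s1 s2 : Equiv.Perm (Fin (m + 1)),
          x * (s1 * s2) * x⁻¹ = (x * s1 * x⁻¹) * (x * s2 * x⁻¹) := by intros; group
      have hconj2 : x * (Equiv.swap t ((x ^ (k + 1)) w) * Equiv.swap t w) * x⁻¹ =
          Equiv.swap t ((x ^ (k + 1 + 1)) w) * Equiv.swap t (x w) := by
        rw [e, ← Equiv.swap_apply_apply, ← Equiv.swap_apply_apply, hxt,
          ← Equiv.Perm.mul_apply x (x ^ (k + 1)), ← pow_succ']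
      have h5 : Equiv.swap t ((x ^ (k + 1 + 1)) w) * Equiv.swap t (x w) ∈
          Subgroup.closure ({x, y} : Set (Equiv.Perm (Fin (m + 1)))) := by
        rw [← hconj2]
        exact mul_mem (mul_mem hxH ih) (inv_mem hxH)
      have h6 : (Equiv.swap t ((x ^ (k + 1 + 1)) w) * Equiv.swap t (x w)) *
          (Equiv.swap t (x w) * Equiv.swap t w) =
          Equiv.swap t ((x ^ (k + 1 + 1)) w) * Equiv.swap t w := by
        rw [mul_assoc, Equiv.swap_mul_self_mul]
      rw [← h6]
      refine mul_mem h5 ?_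
      rw [hxw, ← hzswap]
      exact mul_mem hyH hxH
  have hpairw : ∀ a : Fin (m + 1), a ≠ t → Equiv.swap t a * Equiv.swap t w ∈
      Subgroup.closure ({x, y} : Set (Equiv.Perm (Fin (m + 1)))) := by
    intro a ha
    have hav : (a : ℕ) ≤ m - 1 := by
      have : (a : ℕ) ≠ m := fun h => ha (Fin.val_injective (h.trans ht.symm))
      have := a.is_lt
      omega
    have heq : (x ^ ((a : ℕ) + 1)) w = a := Fin.val_injective (hpow (a : ℕ) hav)
    have := Hk (a : ℕ)
    rwa [heq] at this
  have hpair : ∀ a b : Fin (m + 1), a ≠ t → b ≠ t → Equiv.swap t a * Equiv.swap t b ∈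
      Subgroup.closure ({x, y} : Set (Equiv.Perm (Fin (m + 1)))) := by
    intro a b ha hb
    have e : (Equiv.swap t a * Equiv.swap t w) * (Equiv.swap t b * Equiv.swap t w)⁻¹ =
        Equiv.swap t a * Equiv.swap t b := by
      rw [mul_inv_rev, Equiv.swap_inv, Equiv.swap_inv, mul_assoc, Equiv.swap_mul_self_mul]
    rw [← e]
    exact mul_mem (hpairw a ha) (inv_mem (hpairw b hb))
  -- every permutation is a product of star swaps
  have M : ∀ f : Equiv.Perm (Fin (m + 1)), ∃ l : List (Fin (m + 1)),
      (∀ c ∈ l, c ≠ t) ∧ f = (l.map (fun c => Equiv.swap t c)).prod := by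
    intro f
    refine Equiv.Perm.swap_induction_on f ⟨[], by simp, by simp⟩ ?_
    intro f u v huv ih
    obtain ⟨l, hl1, hl2⟩ := ih
    rcases eq_or_ne u t with rfl | hu
    · refine ⟨v :: l, ?_, ?_⟩
      · intro c hc
        rcases List.mem_cons.1 hc with rfl | hc
        · exact Ne.symm huv
        · exact hl1 c hc
      · rw [List.map_cons, List.prod_cons, ← hl2]
    · rcases eq_or_ne v t with rfl | hv
      · refine ⟨u :: l, ?_, ?_⟩
        · intro c hc
          rcases List.mem_cons.1 hc with rfl | hc
          · exact hu
          · exact hl1 c hc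
        · rw [List.map_cons, List.prod_cons, ← hl2, Equiv.swap_comm]
      · have key : Equiv.swap u v = Equiv.swap t u * Equiv.swap t v * Equiv.swap t u := by
          have h1 : Equiv.swap ((Equiv.swap t u) t) ((Equiv.swap t u) v) =
              Equiv.swap t u * Equiv.swap t v * (Equiv.swap t u)⁻¹ :=
            Equiv.swap_apply_apply (Equiv.swap t u) t v
          rw [Equiv.swap_apply_left, Equiv.swap_apply_of_ne_of_ne hv (Ne.symm huv),
            Equiv.swap_inv] at h1
          exact h1
        refine ⟨u :: v :: u :: l, ?_, ?_⟩
        · intro c hc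
          rcases List.mem_cons.1 hc with rfl | hc
          · exact hu
          rcases List.mem_cons.1 hc with rfl | hc
          · exact hv
          rcases List.mem_cons.1 hc with rfl | hc
          · exact hu
          · exact hl1 c hc
        · rw [List.map_cons, List.map_cons, List.map_cons, List.prod_cons, List.prod_cons,
            List.prod_cons, ← hl2, key]
          group
  -- products of evenly many star swaps lie in the closure
  have pairs : ∀ N : ℕ, ∀ l : List (Fin (m + 1)), l.length ≤ N → (∀ c ∈ l, c ≠ t) →
      Even l.length → (l.map (fun c => Equiv.swap t c)).prod ∈
      Subgroup.closure ({x, y} : Set (Equiv.Perm (Fin (m + 1)))) := by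
    intro N
    induction N with
    | zero =>
      intro l hl _ _
      have : l = [] := List.length_eq_zero_iff.1 (Nat.le_zero.1 hl)
      subst this
      simp only [List.map_nil, List.prod_nil]
      exact one_mem _
    | succ N ih =>
      intro l hl hal hev
      match l with
      | [] =>
        simp only [List.map_nil, List.prod_nil]
        exact one_mem _
      | [a] => simp at hev
      | a :: b :: rest =>
        simp only [List.map_cons, List.prod_cons, ← mul_assoc]
        refine mul_mem (hpair a b (hal a (by simp)) (hal b (by simp))) ?_
        refine ih rest (by simp at hl ⊢; omega) (fun c hc => hal c (by simp [hc])) ?_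
        obtain ⟨s, hs⟩ := hev
        exact ⟨s - 1, by simp at hs ⊢; omega⟩
  constructor
  · exact hxA
  constructor
  · exact hyA
  constructor
  · exact hz
  apply le_antisymm
  · rw [Subgroup.closure_le]
    rintro p hp
    simp only [Set.mem_insert_iff, Set.mem_singleton_iff] at hp
    rcases hp with rfl | rfl
    · exact hxA
    · exact hyA
  · intro f hf
    obtain ⟨l, hl1, hl2⟩ := M f
    have hswaps : ∀ q ∈ l.map (fun c => Equiv.swap t c), Equiv.Perm.IsSwap q := by
      intro q hq
      obtain ⟨c, hc, rfl⟩ := List.mem_map.1 hq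
      exact ⟨t, c, Ne.symm (hl1 c hc), rfl⟩
    have heven : Even l.length := by
      have := (Equiv.Perm.prod_list_swap_mem_alternatingGroup_iff_even_length hswaps).1
        (by rw [← hl2]; exact hf)
      simpa using this
    rw [hl2]
    exact pairs l.length l le_rfl hl1 heven
end

section
/- The alternating group A_5 is not a Beauville group. -/
/- ===== auxiliary development ===== -/

abbrev G5 := alternatingGroup (Fin 5)

def σA : G5 := ⟨finRotate 5, Equiv.Perm.mem_alternatingGroup.mpr (by decide)⟩
def tA : G5 := ⟨Equiv.swap 0 1 * Equiv.swap 2 3, Equiv.Perm.mem_alternatingGroup.mpr (by decide)⟩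
def rA : G5 := ⟨Equiv.swap 0 1 * Equiv.swap 1 2, Equiv.Perm.mem_alternatingGroup.mpr (by decide)⟩

def pres (x : G5) (i j : Fin 5) : Prop :=
  ((x : Equiv.Perm (Fin 5)) i = i ∧ (x : Equiv.Perm (Fin 5)) j = j) ∨
  ((x : Equiv.Perm (Fin 5)) i = j ∧ (x : Equiv.Perm (Fin 5)) j = i)

instance (x : G5) (i j : Fin 5) : Decidable (pres x i j) := by unfold pres; infer_instance

def Q (x y : G5) : Prop :=
  (x^5 = 1 ∧ x ≠ 1) ∨ (y^5 = 1 ∧ y ≠ 1) ∨ ((x*y)^5 = 1 ∧ x*y ≠ 1) ∨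
  (∃ i : Fin 5, (x : Equiv.Perm (Fin 5)) i = i ∧ (y : Equiv.Perm (Fin 5)) i = i) ∨
  (∃ i j : Fin 5, i ≠ j ∧ pres x i j ∧ pres y i j)

instance (x y : G5) : Decidable (Q x y) := by unfold Q; infer_instance

set_option maxRecDepth 100000 in
set_option maxHeartbeats 4000000 in
theorem cardG5 : Nat.card G5 = 60 := by
  rw [Nat.card_eq_fintype_card]; decide

set_option maxRecDepth 100000 in
set_option maxHeartbeats 4000000 in
theorem sigma5 : σA ^ 5 = 1 := by decide

set_option maxRecDepth 100000 in
set_option maxHeartbeats 4000000 in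
theorem sigma6 : σA ^ 6 = σA := by decide

set_option maxRecDepth 100000 in
set_option maxHeartbeats 4000000 in
theorem sigma23 : (σA ^ 2) ^ 3 = σA ^ 6 := by decide

set_option maxRecDepth 100000 in
set_option maxHeartbeats 4000000 in
theorem C5 : ∀ w : G5, ¬(w^5 = 1 ∧ w ≠ 1) ∨
    ∃ g : G5, g * σA * g⁻¹ = w ∨ g * σA^2 * g⁻¹ = w := by decide

set_option maxRecDepth 100000 in
set_option maxHeartbeats 4000000 in
theorem repconj : ∀ x : G5, (x^5 = 1 ∧ x ≠ 1) ∨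
    ∃ g : G5, g*x*g⁻¹ = 1 ∨ g*x*g⁻¹ = tA ∨ g*x*g⁻¹ = rA := by decide

set_option maxRecDepth 100000 in
set_option maxHeartbeats 4000000 in
theorem L1reps : ∀ y : G5, Q 1 y ∧ Q tA y ∧ Q rA y := by decide

set_option maxRecDepth 100000 in
set_option maxHeartbeats 4000000 in
theorem fixProper : ∀ i : Fin 5, ∃ g : G5, ¬ ((g : Equiv.Perm (Fin 5)) i = i) := by
  decide

set_option maxRecDepth 100000 in
set_option maxHeartbeats 4000000 in
theorem presProper : ∀ i j : Fin 5, ∃ g : G5, ¬ pres g i j := by decide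

def fixSub (i : Fin 5) : Subgroup G5 where
  carrier := {g : G5 | (g : Equiv.Perm (Fin 5)) i = i}
  one_mem' := rfl
  mul_mem' := by
    intro a b ha hb
    have ha : (a : Equiv.Perm (Fin 5)) i = i := ha
    have hb : (b : Equiv.Perm (Fin 5)) i = i := hb
    show ((a * b : G5) : Equiv.Perm (Fin 5)) i = i
    rw [Subgroup.coe_mul, Equiv.Perm.mul_apply, hb, ha]
  inv_mem' := by
    intro a ha
    have ha : (a : Equiv.Perm (Fin 5)) i = i := ha
    show ((a⁻¹ : G5) : Equiv.Perm (Fin 5)) i = i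
    rw [Subgroup.coe_inv, Equiv.Perm.inv_eq_iff_eq]
    exact ha.symm

def presSub (i j : Fin 5) : Subgroup G5 where
  carrier := {g : G5 | pres g i j}
  one_mem' := Or.inl ⟨rfl, rfl⟩
  mul_mem' := by
    intro a b ha hb
    have ha : pres a i j := ha
    have hb : pres b i j := hb
    show pres (a * b) i j
    unfold pres at *
    rcases ha with ⟨h1, h2⟩ | ⟨h1, h2⟩ <;> rcases hb with ⟨h3, h4⟩ | ⟨h3, h4⟩ <;>
      simp only [Subgroup.coe_mul, Equiv.Perm.mul_apply, h1, h2, h3, h4] <;> tauto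
  inv_mem' := by
    intro a ha
    have ha : pres a i j := ha
    show pres (a⁻¹) i j
    unfold pres at *
    rcases ha with ⟨h1, h2⟩ | ⟨h1, h2⟩
    · exact Or.inl ⟨by rw [Subgroup.coe_inv, Equiv.Perm.inv_eq_iff_eq]; exact h1.symm,
        by rw [Subgroup.coe_inv, Equiv.Perm.inv_eq_iff_eq]; exact h2.symm⟩
    · exact Or.inr ⟨by rw [Subgroup.coe_inv, Equiv.Perm.inv_eq_iff_eq]; exact h2.symm,
        by rw [Subgroup.coe_inv, Equiv.Perm.inv_eq_iff_eq]; exact h1.symm⟩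

theorem not_gen (x y : G5)
    (h : (∃ i : Fin 5, (x : Equiv.Perm (Fin 5)) i = i ∧ (y : Equiv.Perm (Fin 5)) i = i) ∨
      (∃ i j : Fin 5, i ≠ j ∧ pres x i j ∧ pres y i j)) :
    Subgroup.closure {x, y} ≠ ⊤ := by
  rcases h with ⟨i, hx, hy⟩ | ⟨i, j, _, hx, hy⟩
  · intro htop
    have hle : Subgroup.closure {x, y} ≤ fixSub i := by
      rw [Subgroup.closure_le]
      intro a ha
      rcases ha with rfl | ha
      · exact hx
      · rcases ha with rfl; exact hy
    obtain ⟨g, hg⟩ := fixProper i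
    exact hg (hle (htop ▸ Subgroup.mem_top g))
  · intro htop
    have hle : Subgroup.closure {x, y} ≤ presSub i j := by
      rw [Subgroup.closure_le]
      intro a ha
      rcases ha with rfl | ha
      · exact hx
      · rcases ha with rfl; exact hy
    obtain ⟨g, hg⟩ := presProper i j
    exact hg (hle (htop ▸ Subgroup.mem_top g))

theorem Qcontra (x y : G5) (hQ : Q x y) (hx : ¬(x^5 = 1 ∧ x ≠ 1))
    (hy : ¬(y^5 = 1 ∧ y ≠ 1)) (hxy : ¬((x*y)^5 = 1 ∧ x*y ≠ 1)) :
    Subgroup.closure {x, y} ≠ ⊤ := by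
  unfold Q at hQ
  rcases hQ with h | h | h | h | h
  exacts [absurd h hx, absurd h hy, absurd h hxy,
    not_gen x y (Or.inl h), not_gen x y (Or.inr h)]

theorem guard_conj (φ : G5 ≃* G5) (a : G5) (h : ¬(a^5 = 1 ∧ a ≠ 1)) :
    ¬((φ a)^5 = 1 ∧ φ a ≠ 1) := by
  rintro ⟨h5, h1⟩
  apply h
  constructor
  · apply φ.injective; rw [map_pow, map_one]; exact h5
  · intro ha; apply h1; rw [ha, map_one]

theorem exists5 (x y : G5) (h : Subgroup.closure {x, y} = ⊤) :
    ∃ z : G5, (z = x ∨ z = y ∨ z = x * y) ∧ z^5 = 1 ∧ z ≠ 1 := by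
  by_cases hx : x^5 = 1 ∧ x ≠ 1
  · exact ⟨x, Or.inl rfl, hx⟩
  by_cases hy : y^5 = 1 ∧ y ≠ 1
  · exact ⟨y, Or.inr (Or.inl rfl), hy⟩
  by_cases hxy : (x*y)^5 = 1 ∧ x*y ≠ 1
  · exact ⟨x*y, Or.inr (Or.inr rfl), hxy⟩
  exfalso
  rcases repconj x with hx5 | ⟨g, hg⟩
  · exact hx hx5
  set φ : G5 ≃* G5 := MulAut.conj g with hφ
  have hφx : φ x = g * x * g⁻¹ := rfl
  have hφy : φ y = g * y * g⁻¹ := rfl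
  have htop : Subgroup.closure {φ x, φ y} = ⊤ := by
    have himg : (⇑φ '' {x, y} : Set G5) = {φ x, φ y} := by
      rw [Set.image_insert_eq, Set.image_singleton]
    have hmap := MonoidHom.map_closure (φ : G5 →* G5) ({x, y} : Set G5)
    rw [h] at hmap
    have hsur : Subgroup.map (φ : G5 →* G5) ⊤ = ⊤ :=
      Subgroup.map_top_of_surjective _ φ.surjective
    rw [hsur] at hmap
    rw [← himg]
    have : ⇑(φ : G5 →* G5) = ⇑φ := rfl
    rw [← this]
    exact hmap.symm
  have hgx : ¬((φ x)^5 = 1 ∧ φ x ≠ 1) := guard_conj φ x hx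
  have hgy : ¬((φ y)^5 = 1 ∧ φ y ≠ 1) := guard_conj φ y hy
  have hgxy : ¬((φ x * φ y)^5 = 1 ∧ φ x * φ y ≠ 1) := by
    rw [← map_mul]; exact guard_conj φ (x*y) hxy
  have hQ : Q (φ x) (φ y) := by
    rcases hg with h1 | h1 | h1
    · rw [show φ x = 1 from hφx.trans h1]
      rw [show φ x = 1 from hφx.trans h1] at hgx hgxy
      exact (L1reps (φ y)).1
    · rw [show φ x = tA from hφx.trans h1]
      exact (L1reps (φ y)).2.1
    · rw [show φ x = rA from hφx.trans h1]
      exact (L1reps (φ y)).2.2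
  exact Qcontra (φ x) (φ y) hQ hgx hgy hgxy htop

theorem conj_pow_inv (u c : G5) (n : ℕ) : (c⁻¹ * u * c)^n = c⁻¹ * u^n * c := by
  have := conj_pow (a := c⁻¹) (b := u) (i := n)
  simpa using this

theorem conj5' (z w : G5) (hz5 : z^5 = 1) (hz1 : z ≠ 1) (hw5 : w^5 = 1) (hw1 : w ≠ 1) :
    ∃ i : ℕ, (1 ≤ i ∧ i ≤ 60) ∧ ∃ g : G5, g * z^i * g⁻¹ = w := by
  rcases C5 z with h | ⟨a, ha⟩
  · exact absurd ⟨hz5, hz1⟩ h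
  rcases C5 w with h | ⟨b, hb⟩
  · exact absurd ⟨hw5, hw1⟩ h
  obtain ⟨k, hk, hσ⟩ : ∃ k : ℕ, (k = 1 ∨ k = 3) ∧ σA = a⁻¹ * z^k * a := by
    rcases ha with ha | ha
    · refine ⟨1, Or.inl rfl, ?_⟩
      rw [pow_one, ← ha]; group
    · refine ⟨3, Or.inr rfl, ?_⟩
      have hz3 : z ^ 3 = a * σA ^ 6 * a⁻¹ := by
        rw [← ha, conj_pow, sigma23]
      rw [hz3, sigma6]; group
  rcases hb with hb | hb
  · refine ⟨k, ⟨?_, ?_⟩, b * a⁻¹, ?_⟩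
    · rcases hk with rfl | rfl <;> norm_num
    · rcases hk with rfl | rfl <;> norm_num
    · rw [← hb, hσ]
      generalize z ^ k = u
      group
  · refine ⟨k * 2, ⟨?_, ?_⟩, b * a⁻¹, ?_⟩
    · rcases hk with rfl | rfl <;> norm_num
    · rcases hk with rfl | rfl <;> norm_num
    · rw [← hb, hσ, conj_pow_inv, ← pow_mul]
      generalize z ^ (k * 2) = u
      group

theorem mem_BSigma {x y z : G5} (hz : z = x ∨ z = y ∨ z = x * y) {i : ℕ}
    (h1 : 1 ≤ i) (h2 : i ≤ 60) (g w : G5) (hw : g * z ^ i * g⁻¹ = w) :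
    w ∈ BSigma x y := by
  have hmem : i ∈ Finset.Icc 1 (Nat.card G5) := by
    rw [cardG5]; exact Finset.mem_Icc.mpr ⟨h1, h2⟩
  simp only [BSigma, Set.mem_iUnion]
  refine ⟨i, hmem, g, ?_⟩
  rcases hz with rfl | rfl | rfl
  · exact Or.inl hw.symm
  · exact Or.inr (Or.inl hw.symm)
  · exact Or.inr (Or.inr hw.symm)

/-- The alternating group A₅ is not a Beauville group. -/
theorem A5_not_beauville : ¬ IsBeauville (alternatingGroup (Fin 5)) := by
  rintro ⟨x₁, y₁, x₂, y₂, h1, h2, hS⟩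
  obtain ⟨z₁, hz₁mem, hz₁5, hz₁1⟩ := exists5 x₁ y₁ h1
  obtain ⟨z₂, hz₂mem, hz₂5, hz₂1⟩ := exists5 x₂ y₂ h2
  obtain ⟨i, ⟨hi1, hi2⟩, g, hg⟩ := conj5' z₁ z₂ hz₁5 hz₁1 hz₂5 hz₂1
  have m1 : z₂ ∈ BSigma x₁ y₁ := mem_BSigma hz₁mem hi1 hi2 g z₂ hg
  have m2 : z₂ ∈ BSigma x₂ y₂ := by
    refine mem_BSigma hz₂mem le_rfl (by norm_num) 1 z₂ ?_
    rw [pow_one]; group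
  have hmem : z₂ ∈ BSigma x₁ y₁ ∩ BSigma x₂ y₂ := ⟨m1, m2⟩
  rw [hS] at hmem
  exact hz₂1 hmem
end
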